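/- arXiv:2512.13332 — 11 statements merged into one kernel-verified Lean document; each statement's English description precedes it below -/
import Mathlib

section
/- Let (R; ·, ⁺) be a restriction semigroup and m : R → R a unary operation. Then every σ-class of R contains a maximum element with respect to the natural partial order and m(a) is the maximum element of the σ-class of a for every a ∈ R, if and only if the following two conditions hold: (M1) m(a) ≥ a for all a ∈ R; (M2) m(a) = m(ea) for all a ∈ R and all projections e ∈ R. -/
/-- `e` is a projection: an element of the form `a⁺`. -/
def IsProjection {R : Type*} (plus : R → R) (e : R) : Prop := ∃ a, e = plus a

/-- The natural partial order: `s ≤ t` iff `s = s⁺·t`. -/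
def NatLe {R : Type*} (mul : R → R → R) (plus : R → R) (s t : R) : Prop :=
  s = mul (plus s) t

/-- The relation σ: `s σ t` iff `e·s = e·t` for some projection `e`. -/
def SigmaRel {R : Type*} (mul : R → R → R) (plus : R → R) (s t : R) : Prop :=
  ∃ e, IsProjection plus e ∧ mul e s = mul e t

/-!
If `m` picks the maximum of each σ-class, then (M1) is the instance `t = a`, and (M2) holds
because `e·a σ a` and a σ-class has only one maximum, the natural order being antisymmetric.
Conversely, (M2) makes `m` constant on σ-classes: if `e·s = e·t` then
`m s = m (e·s) = m (e·t) = m t`; together with (M1) this makes `m a` an upper bound of the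
σ-class of `a` lying in it.
-/

section RestrictionSemigroup

variable {R : Type*} [Semigroup R] {plus : R → R}

theorem IsProjection.mul_self (h1 : ∀ x : R, plus x * x = x)
    (h3 : ∀ x y : R, plus (plus x * y) = plus x * plus y) {e : R} (he : IsProjection plus e) :
    e * e = e := by
  obtain ⟨x, rfl⟩ := he
  rw [← h3, h1]

theorem IsProjection.mul (h3 : ∀ x y : R, plus (plus x * y) = plus x * plus y) {e f : R}
    (he : IsProjection plus e) (hf : IsProjection plus f) : IsProjection plus (e * f) := by
  obtain ⟨⟨x, rfl⟩, ⟨y, rfl⟩⟩ := And.intro he hf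
  exact ⟨plus x * y, (h3 x y).symm⟩

theorem IsProjection.mul_comm (h2 : ∀ x y : R, plus x * plus y = plus y * plus x) {e f : R}
    (he : IsProjection plus e) (hf : IsProjection plus f) : e * f = f * e := by
  obtain ⟨⟨x, rfl⟩, ⟨y, rfl⟩⟩ := And.intro he hf
  exact h2 x y

theorem natLe_antisymm (h1 : ∀ x : R, plus x * x = x)
    (h2 : ∀ x y : R, plus x * plus y = plus y * plus x) {s t : R}
    (hst : NatLe (· * ·) plus s t) (hts : NatLe (· * ·) plus t s) : s = t := by
  change s = plus s * t at hst
  change t = plus t * s at hts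
  calc s = plus s * (plus t * s) := by rw [← hts]; exact hst
    _ = plus t * (plus s * s) := by rw [← mul_assoc, h2, mul_assoc]
    _ = t := by rw [h1, ← hts]

theorem sigmaRel_refl (s : R) : SigmaRel (· * ·) plus s s :=
  ⟨plus s, ⟨s, rfl⟩, rfl⟩

theorem SigmaRel.symm {s t : R} (h : SigmaRel (· * ·) plus s t) : SigmaRel (· * ·) plus t s :=
  let ⟨e, he, hst⟩ := h
  ⟨e, he, hst.symm⟩

theorem SigmaRel.trans (h2 : ∀ x y : R, plus x * plus y = plus y * plus x)
    (h3 : ∀ x y : R, plus (plus x * y) = plus x * plus y) {s t u : R}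
    (hst : SigmaRel (· * ·) plus s t) (htu : SigmaRel (· * ·) plus t u) :
    SigmaRel (· * ·) plus s u := by
  obtain ⟨⟨e, he, hst : e * s = e * t⟩, ⟨f, hf, htu : f * t = f * u⟩⟩ := And.intro hst htu
  refine ⟨e * f, he.mul h3 hf, ?_⟩
  calc e * f * s = f * (e * s) := by rw [he.mul_comm h2 hf, mul_assoc]
    _ = e * (f * t) := by simp only [hst, ← mul_assoc, hf.mul_comm h2 he]
    _ = e * f * u := by rw [htu, mul_assoc]

theorem sigmaRel_projection_mul_self (h1 : ∀ x : R, plus x * x = x)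
    (h3 : ∀ x y : R, plus (plus x * y) = plus x * plus y) {e : R} (he : IsProjection plus e)
    (s : R) : SigmaRel (· * ·) plus (e * s) s :=
  ⟨e, he, show e * (e * s) = e * s by rw [← mul_assoc, he.mul_self h1 h3]⟩

variable (plus) in
def IsSigmaClassMax (a x : R) : Prop :=
  SigmaRel (· * ·) plus x a ∧ ∀ t, SigmaRel (· * ·) plus t a → NatLe (· * ·) plus t x

theorem IsSigmaClassMax.natLe {a x : R} (h : IsSigmaClassMax plus a x) :
    NatLe (· * ·) plus a x :=
  h.2 a (sigmaRel_refl a)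

theorem IsSigmaClassMax.eq_of_sigmaRel (h1 : ∀ x : R, plus x * x = x)
    (h2 : ∀ x y : R, plus x * plus y = plus y * plus x)
    (h3 : ∀ x y : R, plus (plus x * y) = plus x * plus y) {a b x y : R}
    (hx : IsSigmaClassMax plus a x) (hy : IsSigmaClassMax plus b y)
    (hab : SigmaRel (· * ·) plus a b) : x = y :=
  natLe_antisymm h1 h2 (hy.2 x (hx.1.trans h2 h3 hab))
    (hx.2 y (hy.1.trans h2 h3 hab.symm))

theorem isSigmaClassMax_of_le_of_sigmaRel (h1 : ∀ x : R, plus x * x = x) {m : R → R}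
    (hle : ∀ a, NatLe (· * ·) plus a (m a))
    (hconst : ∀ s t, SigmaRel (· * ·) plus s t → m s = m t) (a : R) :
    IsSigmaClassMax plus a (m a) := by
  refine ⟨⟨plus a, ⟨a, rfl⟩, ?_⟩, fun t hta => ?_⟩
  · exact (hle a).symm.trans (h1 a).symm
  · rw [← hconst t a hta]
    exact hle t

end RestrictionSemigroup

theorem stmt_5_general {R : Type*} [Semigroup R] (plus : R → R) (m : R → R)
    (h1 : ∀ x : R, plus x * x = x)
    (h2 : ∀ x y : R, plus x * plus y = plus y * plus x)
    (h3 : ∀ x y : R, plus (plus x * y) = plus x * plus y) :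
    (∀ a : R, SigmaRel (· * ·) plus (m a) a ∧
      ∀ t, SigmaRel (· * ·) plus t a → NatLe (· * ·) plus t (m a)) ↔
    ((∀ a : R, NatLe (· * ·) plus a (m a)) ∧
      (∀ (a e : R), IsProjection plus e → m a = m (e * a))) := by
  change (∀ a, IsSigmaClassMax plus a (m a)) ↔ _
  constructor
  · intro hmax
    refine ⟨fun a => (hmax a).natLe, fun a e he => ?_⟩
    exact (hmax a).eq_of_sigmaRel h1 h2 h3 (hmax (e * a))
      (sigmaRel_projection_mul_self h1 h3 he a).symm
  · rintro ⟨hM1, hM2⟩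
    refine isSigmaClassMax_of_le_of_sigmaRel h1 hM1 fun s t ⟨e, he, hst⟩ => ?_
    rw [hM2 s e he, hM2 t e he]
    exact congrArg m hst

/-- For a restriction semigroup `(R; ·, ⁺)` and a unary operation
`m : R → R`: every σ-class has a maximum element and `m a` is the maximum of the
σ-class of `a` for every `a`, iff (M1) `m a ≥ a` for all `a` and
(M2) `m a = m (e·a)` for all `a` and all projections `e`. -/
theorem stmt_5 {R : Type*} [Semigroup R] (plus : R → R) (m : R → R)
    (h1 : ∀ x : R, plus x * x = x)
    (h2 : ∀ x y : R, plus x * plus y = plus y * plus x)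
    (h3 : ∀ x y : R, plus (plus x * y) = plus x * plus y)
    (h4 : ∀ x y : R, x * plus y = plus (x * y) * x) :
    (∀ a : R, SigmaRel (· * ·) plus (m a) a ∧
      ∀ t, SigmaRel (· * ·) plus t a → NatLe (· * ·) plus t (m a)) ↔
    ((∀ a : R, NatLe (· * ·) plus a (m a)) ∧
      (∀ (a e : R), IsProjection plus e → m a = m (e * a))) :=
  stmt_5_general plus m h1 h2 h3
end

section
/- Let S be a monoid with identity λ acting on a meet-semilattice E by endomorphisms, and suppose E has a greatest element 1. Then the semidirect product E ⋊ S is an F-restriction semigroup in which m((e,s)) = (1,s) for every (e,s) ∈ E ⋊ S, and its maximum projection — which is its unique left identity — is the element (1, λ). -/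
/-- Multiplication of the semidirect product `E ⋊ S`:
`(e,s)(f,t) = (e ⊓ s·f, st)`. -/
def sdMul {S E : Type*} [Monoid S] [SemilatticeInf E] (act : S → E → E)
    (p q : E × S) : E × S :=
  (p.1 ⊓ act p.2 q.1, p.2 * q.2)

/-- The unary operation of the semidirect product: `(e,s)⁺ = (e,λ)`. -/
def sdPlus {S E : Type*} [Monoid S] (p : E × S) : E × S := (p.1, 1)

/-
Everything is computed coordinatewise. The second coordinate of a product is the product in `S`
and projections are the elements `(e, λ)`, so `p σ q` holds exactly when `p` and `q` have the same
second coordinate. Inside the σ-class of the elements with second coordinate `s`, multiplying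
`(⊤, s)` on the left by the projection `(e, λ)` gives `(e, s)`, so `(⊤, s)` is the maximum. A left
identity `(e, s)` must have `s = λ`, and `(e, λ)(⊤, λ) = (e, λ) = (⊤, λ)` forces `e = ⊤`.
-/

theorem isProjection_sdPlus_iff {S E : Type*} [Monoid S] {e : E × S} :
    IsProjection sdPlus e ↔ e.2 = 1 :=
  ⟨fun ⟨_, he⟩ => by rw [he]; rfl, fun he => ⟨e, Prod.ext rfl he⟩⟩

section SemidirectProduct

variable {S E : Type*} [Monoid S] [SemilatticeInf E] (act : S → E → E)

theorem sdMul_assoc (hact1 : ∀ (s t : S) (e : E), act (s * t) e = act s (act t e))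
    (hact3 : ∀ (s : S) (e f : E), act s (e ⊓ f) = act s e ⊓ act s f) (p q r : E × S) :
    sdMul act (sdMul act p q) r = sdMul act p (sdMul act q r) := by
  simp only [sdMul, hact1, hact3, inf_assoc, mul_assoc]

variable {act}

theorem sdMul_sdPlus (hact2 : ∀ e : E, act 1 e = e) (p q : E × S) :
    sdMul act (sdPlus p) q = (p.1 ⊓ q.1, q.2) := by
  simp [sdMul, sdPlus, hact2]

theorem sdMul_sdPlus_self (hact2 : ∀ e : E, act 1 e = e) (p : E × S) :
    sdMul act (sdPlus p) p = p := by
  simp [sdMul_sdPlus hact2]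

theorem sdMul_sdPlus_comm (hact2 : ∀ e : E, act 1 e = e) (p q : E × S) :
    sdMul act (sdPlus p) (sdPlus q) = sdMul act (sdPlus q) (sdPlus p) := by
  rw [sdMul_sdPlus hact2, sdMul_sdPlus hact2]
  simp [sdPlus, inf_comm]

theorem sdPlus_sdMul_sdPlus (hact2 : ∀ e : E, act 1 e = e) (p q : E × S) :
    sdPlus (sdMul act (sdPlus p) q) = sdMul act (sdPlus p) (sdPlus q) := by
  rw [sdMul_sdPlus hact2, sdMul_sdPlus hact2]
  rfl

theorem sdMul_sdPlus_right (hact2 : ∀ e : E, act 1 e = e) (p q : E × S) :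
    sdMul act p (sdPlus q) = sdMul act (sdPlus (sdMul act p q)) p := by
  rw [sdMul_sdPlus hact2]
  simp only [sdMul, sdPlus, mul_one]
  rw [inf_assoc, inf_comm (act p.2 q.1), ← inf_assoc, inf_idem]

theorem sigmaRel_sdMul_iff (hact2 : ∀ e : E, act 1 e = e) {p q : E × S} :
    SigmaRel (sdMul act) sdPlus p q ↔ p.2 = q.2 := by
  constructor
  · rintro ⟨e, ⟨a, rfl⟩, he⟩
    simpa [sdMul_sdPlus hact2] using congrArg Prod.snd he
  · intro h
    refine ⟨sdPlus (p.1 ⊓ q.1, 1), ⟨_, rfl⟩, ?_⟩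
    simp only [sdMul_sdPlus hact2, h, Prod.mk.injEq, and_true]
    rw [inf_right_comm, inf_idem, inf_assoc, inf_idem]

theorem natLe_top_iff [OrderTop E] (hact2 : ∀ e : E, act 1 e = e) {p : E × S} {s : S} :
    NatLe (sdMul act) sdPlus p (⊤, s) ↔ p.2 = s := by
  rw [NatLe, sdMul_sdPlus hact2]
  simp [Prod.ext_iff, eq_comm]

theorem sdMul_top_one [OrderTop E] (hact2 : ∀ e : E, act 1 e = e) (p : E × S) :
    sdMul act (⊤, 1) p = p := by
  simp [sdMul, hact2]

theorem eq_top_one_of_sdMul_eq_self [OrderTop E] {l : E × S}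
    (hl : ∀ p : E × S, sdMul act l p = p) : l = (⊤, 1) := by
  have h := hl (⊤, 1)
  simp only [sdMul, mul_one, Prod.ext_iff] at h
  exact Prod.ext (top_unique (h.1 ▸ inf_le_left)) h.2

end SemidirectProduct

/-- If a monoid `S` acts on a meet-semilattice `E` with greatest
element `1` by endomorphisms, then `E ⋊ S` is an F-restriction semigroup with
`m((e,s)) = (1,s)`, whose maximum projection — its unique left identity — is
`(1, λ)`. -/
theorem stmt_6 {S E : Type*} [Monoid S] [SemilatticeInf E] [OrderTop E]
    (act : S → E → E)
    (hact1 : ∀ (s t : S) (e : E), act (s * t) e = act s (act t e))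
    (hact2 : ∀ e : E, act 1 e = e)
    (hact3 : ∀ (s : S) (e f : E), act s (e ⊓ f) = act s e ⊓ act s f) :
    -- E ⋊ S is a restriction semigroup:
    (∀ p q r : E × S, sdMul act (sdMul act p q) r = sdMul act p (sdMul act q r)) ∧
    (∀ p : E × S, sdMul act (sdPlus p) p = p) ∧
    (∀ p q : E × S, sdMul act (sdPlus p) (sdPlus q) = sdMul act (sdPlus q) (sdPlus p)) ∧
    (∀ p q : E × S, sdPlus (sdMul act (sdPlus p) q) = sdMul act (sdPlus p) (sdPlus q)) ∧
    (∀ p q : E × S, sdMul act p (sdPlus q) = sdMul act (sdPlus (sdMul act p q)) p) ∧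
    -- it is F-restriction with m((e,s)) = (⊤,s):
    (∀ p : E × S, SigmaRel (sdMul act) sdPlus ((⊤ : E), p.2) p ∧
      ∀ q : E × S, SigmaRel (sdMul act) sdPlus q p →
        NatLe (sdMul act) sdPlus q ((⊤ : E), p.2)) ∧
    -- (⊤,1) is the maximum projection:
    (IsProjection sdPlus ((⊤ : E), (1 : S)) ∧
      ∀ e : E × S, IsProjection sdPlus e →
        NatLe (sdMul act) sdPlus e ((⊤ : E), (1 : S))) ∧
    -- (⊤,1) is a left identity, and the unique one:
    (∀ p : E × S, sdMul act ((⊤ : E), (1 : S)) p = p) ∧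
    (∀ l : E × S, (∀ p : E × S, sdMul act l p = p) → l = ((⊤ : E), (1 : S))) := by
  refine ⟨sdMul_assoc act hact1 hact3, sdMul_sdPlus_self hact2, sdMul_sdPlus_comm hact2,
    sdPlus_sdMul_sdPlus hact2, sdMul_sdPlus_right hact2, fun p => ⟨?_, fun q hq => ?_⟩,
    ⟨isProjection_sdPlus_iff.2 rfl, fun e he => ?_⟩, sdMul_top_one hact2,
    fun l => eq_top_one_of_sdMul_eq_self⟩
  · exact (sigmaRel_sdMul_iff hact2).2 rfl
  · exact (natLe_top_iff hact2).2 ((sigmaRel_sdMul_iff hact2).1 hq)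
  · exact (natLe_top_iff hact2).2 (isProjection_sdPlus_iff.1 he)
end

section
/- Every perfect F-restriction semigroup is a monoid: its maximum projection λ is a two-sided identity element. -/
theorem SigmaRel.refl {R : Type*} (mul : R → R → R) (plus : R → R) (s : R) :
    SigmaRel mul plus s s :=
  ⟨plus s, ⟨s, rfl⟩, rfl⟩

section RestrictionSemigroup

variable {R : Type*} [Semigroup R] {plus : R → R}

theorem plus_mul_eq_self_of_eq_plus_mul (h1 : ∀ x : R, plus x * x = x)
    (h2 : ∀ x y : R, plus x * plus y = plus y * plus x) {s t : R} (hs : s = plus s * t) :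
    plus t * s = s :=
  calc plus t * s = plus t * plus s * t := by rw [mul_assoc, ← hs]
    _ = plus s * (plus t * t) := by rw [h2, mul_assoc]
    _ = s := by rw [h1, ← hs]

theorem mul_plus_self_eq_self (h1 : ∀ x : R, plus x * x = x)
    (h4 : ∀ x y : R, x * plus y = plus (x * y) * x) {x : R} (hx : plus (x * x) = plus x) :
    x * plus x = x := by
  rw [h4, hx, h1]

theorem mul_plus_eq_self_of_eq_plus_mul {s t : R} (hs : s = plus s * t)
    (ht : t * plus t = t) : s * plus t = s := by
  rw [hs, mul_assoc, ht]

end RestrictionSemigroup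

theorem stmt_7_general {R : Type*} [Semigroup R] (plus m : R → R) (lam : R)
    (h1 : ∀ x : R, plus x * x = x)
    (h2 : ∀ x y : R, plus x * plus y = plus y * plus x)
    (h4 : ∀ x y : R, x * plus y = plus (x * y) * x)
    -- m a is the maximum element of the σ-class of a:
    (hF : ∀ a : R, SigmaRel (· * ·) plus (m a) a ∧
      ∀ t, SigmaRel (· * ·) plus t a → NatLe (· * ·) plus t (m a))
    -- perfectness:
    (hperf1 : ∀ s t : R, m s * m t = m (s * t))
    (hperf2 : ∀ s : R, plus (m s) = lam) :
    ∀ s : R, lam * s = s ∧ s * lam = s := by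
  intro s
  have hs : s = plus s * m s := (hF s).2 s (SigmaRel.refl _ plus s)
  have hm : m s * plus (m s) = m s :=
    mul_plus_self_eq_self h1 h4 (by rw [hperf1, hperf2, hperf2])
  rw [← hperf2 s]
  exact ⟨plus_mul_eq_self_of_eq_plus_mul h1 h2 hs, mul_plus_eq_self_of_eq_plus_mul hs hm⟩

/-- Every perfect F-restriction semigroup is a monoid: its maximum
projection λ is a two-sided identity element. -/
theorem stmt_7 {R : Type*} [Semigroup R] (plus m : R → R) (lam : R)
    (h1 : ∀ x : R, plus x * x = x)
    (h2 : ∀ x y : R, plus x * plus y = plus y * plus x)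
    (h3 : ∀ x y : R, plus (plus x * y) = plus x * plus y)
    (h4 : ∀ x y : R, x * plus y = plus (x * y) * x)
    -- m a is the maximum element of the σ-class of a:
    (hF : ∀ a : R, SigmaRel (· * ·) plus (m a) a ∧
      ∀ t, SigmaRel (· * ·) plus t a → NatLe (· * ·) plus t (m a))
    -- lam is the maximum projection:
    (hlamProj : IsProjection plus lam)
    (hlamMax : ∀ e, IsProjection plus e → NatLe (· * ·) plus e lam)
    -- perfectness:
    (hperf1 : ∀ s t : R, m s * m t = m (s * t))
    (hperf2 : ∀ s : R, plus (m s) = lam) :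
    ∀ s : R, lam * s = s ∧ s * lam = s :=
  stmt_7_general plus m lam h1 h2 h4 hF hperf1 hperf2
end

section
/- Let S be a monoid with identity λ acting by endomorphisms on a meet-semilattice E with greatest element 1, and consider the F-restriction semigroup E ⋊ S (in which m((e,s)) = (1,s)). Then the following are equivalent: (a) E ⋊ S is strong; (b) E ⋊ S is perfect; (c) s·1 = 1 for all s ∈ S. -/
/-- The maximum element of the σ-class of `(e,s)` in `E ⋊ S`: `m((e,s)) = (⊤,s)`. -/
def sdM {S E : Type*} [Monoid S] [SemilatticeInf E] [OrderTop E] (p : E × S) : E × S := ((⊤ : E), p.2)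

/-!
Because `m((e,s)) = (1,s)`, everything is explicit: for `x = (e,s)` and `y = (f,t)` we have
`m(x)m(y) = (s·1, st)`, `m(x)⁺ = (1,λ)` and `m(xy) = (1,st)`. So perfection, and (since
`λ·1 = 1`) also the strong identity, reduce to `(s·1, st) = (1, st)`, that is, to `s·1 = 1`.
-/

section SemidirectProduct

variable {S E : Type*} [Monoid S] [SemilatticeInf E] [OrderTop E] (act : S → E → E)

def SdIsStrong : Prop :=
  ∀ p q : E × S, sdMul act (sdM p) (sdM q) = sdMul act (sdPlus (sdM p)) (sdM (sdMul act p q))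

def SdIsPerfect : Prop :=
  (∀ p q : E × S, sdMul act (sdM p) (sdM q) = sdM (sdMul act p q)) ∧
    ∀ p : E × S, sdPlus (sdM p) = ((⊤ : E), (1 : S))

lemma sdMul_sdM_sdM (p q : E × S) :
    sdMul act (sdM p) (sdM q) = (act p.2 ⊤, p.2 * q.2) := by
  simp [sdMul, sdM]

lemma sdPlus_sdM (p : E × S) : sdPlus (sdM p) = ((⊤ : E), (1 : S)) := rfl

lemma sdM_sdMul (p q : E × S) : sdM (sdMul act p q) = ((⊤ : E), p.2 * q.2) := rfl

lemma sdIsPerfect_iff : SdIsPerfect act ↔ ∀ s : S, act s ⊤ = ⊤ := by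
  simp only [SdIsPerfect, sdMul_sdM_sdM, sdPlus_sdM, sdM_sdMul, Prod.mk.injEq, and_true,
    implies_true, Prod.forall, forall_const]

lemma sdIsStrong_iff (h_one : act 1 ⊤ = ⊤) : SdIsStrong act ↔ ∀ s : S, act s ⊤ = ⊤ := by
  simp only [SdIsStrong, sdMul_sdM_sdM, sdPlus_sdM, sdM_sdMul]
  simp only [sdMul, h_one, top_inf_eq, one_mul, Prod.mk.injEq, and_true, Prod.forall,
    forall_const]

end SemidirectProduct

theorem stmt_8_general {S E : Type*} [Monoid S] [SemilatticeInf E] [OrderTop E]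
    (act : S → E → E)
    (hact2 : ∀ e : E, act 1 e = e) :
    -- (a) strong ↔ (b) perfect:
    ((∀ p q : E × S, sdMul act (sdM p) (sdM q) =
        sdMul act (sdPlus (sdM p)) (sdM (sdMul act p q))) ↔
      ((∀ p q : E × S, sdMul act (sdM p) (sdM q) = sdM (sdMul act p q)) ∧
        (∀ p : E × S, sdPlus (sdM p) = ((⊤ : E), (1 : S))))) ∧
    -- (b) perfect ↔ (c) s·1 = 1 for all s:
    (((∀ p q : E × S, sdMul act (sdM p) (sdM q) = sdM (sdMul act p q)) ∧
        (∀ p : E × S, sdPlus (sdM p) = ((⊤ : E), (1 : S)))) ↔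
      (∀ s : S, act s (⊤ : E) = (⊤ : E))) := by
  have perfect_iff := sdIsPerfect_iff act
  have strong_iff := sdIsStrong_iff act (hact2 ⊤)
  exact ⟨strong_iff.trans perfect_iff.symm, perfect_iff⟩

/-- For a monoid `S` acting by endomorphisms on a meet-semilattice
`E` with greatest element `1`, the F-restriction semigroup `E ⋊ S`
(with `m((e,s)) = (1,s)` and maximum projection `(1,λ)`) is strong iff it is
perfect iff `s·1 = 1` for all `s ∈ S`. -/
theorem stmt_8 {S E : Type*} [Monoid S] [SemilatticeInf E] [OrderTop E]
    (act : S → E → E)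
    (hact1 : ∀ (s t : S) (e : E), act (s * t) e = act s (act t e))
    (hact2 : ∀ e : E, act 1 e = e)
    (hact3 : ∀ (s : S) (e f : E), act s (e ⊓ f) = act s e ⊓ act s f) :
    -- (a) strong ↔ (b) perfect:
    ((∀ p q : E × S, sdMul act (sdM p) (sdM q) =
        sdMul act (sdPlus (sdM p)) (sdM (sdMul act p q))) ↔
      ((∀ p q : E × S, sdMul act (sdM p) (sdM q) = sdM (sdMul act p q)) ∧
        (∀ p : E × S, sdPlus (sdM p) = ((⊤ : E), (1 : S))))) ∧
    -- (b) perfect ↔ (c) s·1 = 1 for all s: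
    (((∀ p q : E × S, sdMul act (sdM p) (sdM q) = sdM (sdMul act p q)) ∧
        (∀ p : E × S, sdPlus (sdM p) = ((⊤ : E), (1 : S)))) ↔
      (∀ s : S, act s (⊤ : E) = (⊤ : E))) :=
  stmt_8_general act hact2
end

section
/- Let S be a monoid with identity λ generated by the image of a map ι : X → S, and for x ∈ X let Γ_x be the subgraph of Cay(S,X) with vertex set {λ, ι(x)} and the single edge (λ, x, ι(x)). Then M(S,X) is generated as a (·,⁺)-algebra by the set {(Γ_x, ι(x)) : x ∈ X}, i.e. the least subset of M(S,X) containing these elements and closed under multiplication and ⁺ is all of M(S,X); and M^λ(S,X) is generated by these elements together with the identity element (Γ_λ, λ). -/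
/-!
Let `T` contain the generators and be closed under both operations. Multiplying generators
along a path of `Γ` from `1` ending with the edge `(u, x)` gives an element `(P, u * ι x)` of
`T` with `P` the path, a subgraph of `Γ`. Since `(A, 1)(B, 1) = (A ∪ B, 1)`, applying `⁺` to
these and multiplying gives `(Γ, 1) ∈ T`, because an accessible graph is the union of the paths
reaching its edges. Then `(Γ, s) = (Γ, 1)(P, s)` for a path `P` ending in `s`. This needs an
edge of `Γ`, which exists unless `(Γ, s) = (Γ_λ, λ)`.
-/

/-- A (pre)subgraph of the Cayley graph `Cay(S,X)`: a set of vertices (elements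
of `S`) and a set of edges; the edge `(s, x)` has source `s`, label `x` and
target `s * ι x`. -/
structure PreGraph (S X : Type*) where
  verts : Set S
  edges : Set (S × X)

/-- One step along an edge of `G`. -/
def PreGraph.step {S X : Type*} [Mul S] (ι : X → S) (G : PreGraph S X)
    (a b : S) : Prop :=
  ∃ x, (a, x) ∈ G.edges ∧ b = a * ι x

/-- `G` is a finite accessible subgraph of `Cay(S,X)`: it is finite, the
endpoints of every edge are vertices, `1 ∈ V(G)` and every vertex is reachable
from `1` by a directed path. -/
def IsAccessible {S X : Type*} [Monoid S] (ι : X → S) (G : PreGraph S X) : Prop :=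
  G.verts.Finite ∧ G.edges.Finite ∧
  (∀ e ∈ G.edges, e.1 ∈ G.verts ∧ e.1 * ι e.2 ∈ G.verts) ∧
  (1 : S) ∈ G.verts ∧
  ∀ v ∈ G.verts, Relation.ReflTransGen (PreGraph.step ι G) 1 v

/-- The translate `sG` of a subgraph. -/
def PreGraph.trans {S X : Type*} [Mul S] (s : S) (G : PreGraph S X) :
    PreGraph S X :=
  ⟨(s * ·) '' G.verts, (fun e => (s * e.1, e.2)) '' G.edges⟩

/-- Union of subgraphs. -/
def PreGraph.union {S X : Type*} (A B : PreGraph S X) : PreGraph S X :=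
  ⟨A.verts ∪ B.verts, A.edges ∪ B.edges⟩

/-- Multiplication of the Gould expansion: `(A,s)(B,t) = (A ∪ sB, st)`. -/
def gmul {S X : Type*} [Mul S] (p q : PreGraph S X × S) : PreGraph S X × S :=
  (p.1.union (PreGraph.trans p.2 q.1), p.2 * q.2)

/-- The unary operation of the Gould expansion: `(A,s)⁺ = (A,1)`. -/
def gplus {S X : Type*} [One S] (p : PreGraph S X × S) : PreGraph S X × S :=
  (p.1, 1)

/-- The graph `Γ_λ` with single vertex `1` and no edges. -/
def lambdaGraph (S X : Type*) [One S] : PreGraph S X := ⟨{1}, ∅⟩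

/-- The underlying set of the Gould expansion `M^λ(S,X)`. -/
def Mlam {S X : Type*} [Monoid S] (ι : X → S) : Set (PreGraph S X × S) :=
  {p | IsAccessible ι p.1 ∧ p.2 ∈ p.1.verts}

/-- The underlying set of `M(S,X) = M^λ(S,X) \ {(Γ_λ, λ)}`. -/
def MSem {S X : Type*} [Monoid S] (ι : X → S) : Set (PreGraph S X × S) :=
  Mlam ι \ {(lambdaGraph S X, 1)}

/-- The generator `(Γ_x, ι x)` of the Gould expansion. -/
def genElt {S X : Type*} [Monoid S] (ι : X → S) (x : X) : PreGraph S X × S :=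
  (⟨{1, ι x}, {((1 : S), x)}⟩, ι x)

namespace PreGraph

variable {S X : Type*}

theorem ext {A B : PreGraph S X} (hv : A.verts = B.verts) (he : A.edges = B.edges) :
    A = B := by
  cases A; cases B; congr

/-- Subgraphs are ordered by inclusion of vertex and edge sets; `union` is their join. -/
def toProd (G : PreGraph S X) : Set S × Set (S × X) := (G.verts, G.edges)

theorem toProd_injective : Function.Injective (toProd (S := S) (X := X)) :=
  fun _ _ h => ext (congrArg Prod.fst h) (congrArg Prod.snd h)

instance : PartialOrder (PreGraph S X) := PartialOrder.lift toProd toProd_injective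

instance : Max (PreGraph S X) := ⟨union⟩

instance : SemilatticeSup (PreGraph S X) :=
  toProd_injective.semilatticeSup _ Iff.rfl Iff.rfl fun _ _ => rfl

instance : OrderBot (PreGraph S X) where
  bot := ⟨∅, ∅⟩
  bot_le _ := ⟨Set.empty_subset _, Set.empty_subset _⟩

theorem le_def {A B : PreGraph S X} : A ≤ B ↔ A.verts ⊆ B.verts ∧ A.edges ⊆ B.edges :=
  Iff.rfl

theorem trans_one [Monoid S] (G : PreGraph S X) : trans (1 : S) G = G :=
  ext (by simp [trans]) (by simp [trans])

def edgeGraph [Mul S] (ι : X → S) (e : S × X) : PreGraph S X :=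
  ⟨{e.1, e.1 * ι e.2}, {e}⟩

theorem trans_edgeGraph [Semigroup S] (ι : X → S) (s : S) (e : S × X) :
    trans s (edgeGraph ι e) = edgeGraph ι (s * e.1, e.2) :=
  ext (by simp [trans, edgeGraph, Set.image_pair, mul_assoc]) (by simp [trans, edgeGraph])

end PreGraph

open PreGraph

section Operations

variable {S X : Type*} [Monoid S]

theorem gmul_one_left (A B : PreGraph S X) (t : S) : gmul (A, 1) (B, t) = (A ⊔ B, t) := by
  simp only [gmul, trans_one, one_mul]
  rfl

theorem genElt_eq_edgeGraph (ι : X → S) (x : X) :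
    genElt ι x = (edgeGraph ι (1, x), 1 * ι x) := by
  simp only [genElt, edgeGraph, one_mul]

theorem gmul_genElt (ι : X → S) (A : PreGraph S X) (s : S) (x : X) :
    gmul (A, s) (genElt ι x) = (A ⊔ edgeGraph ι (s, x), s * ι x) := by
  rw [genElt_eq_edgeGraph, gmul, trans_edgeGraph, mul_one, one_mul]
  rfl

end Operations

namespace IsAccessible

variable {S X : Type*} [Monoid S] {ι : X → S} {Γ : PreGraph S X}

theorem edges_finite (hΓ : IsAccessible ι Γ) : Γ.edges.Finite := hΓ.2.1

theorem ends_mem (hΓ : IsAccessible ι Γ) {e : S × X} (he : e ∈ Γ.edges) :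
    e.1 ∈ Γ.verts ∧ e.1 * ι e.2 ∈ Γ.verts := hΓ.2.2.1 e he

theorem one_mem (hΓ : IsAccessible ι Γ) : (1 : S) ∈ Γ.verts := hΓ.2.2.2.1

theorem reachable (hΓ : IsAccessible ι Γ) {v : S} (hv : v ∈ Γ.verts) :
    Relation.ReflTransGen (step ι Γ) 1 v := hΓ.2.2.2.2 v hv

theorem edgeGraph_le (hΓ : IsAccessible ι Γ) {e : S × X} (he : e ∈ Γ.edges) :
    edgeGraph ι e ≤ Γ := by
  obtain ⟨hsrc, htgt⟩ := hΓ.ends_mem he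
  refine le_def.2 ⟨?_, by simpa [edgeGraph] using he⟩
  rintro v (rfl | rfl)
  exacts [hsrc, htgt]

/-- Every vertex other than `1` is the target of an edge. -/
theorem le_of_forall_edgeGraph_le (hΓ : IsAccessible ι Γ) {A : PreGraph S X}
    (h1 : (1 : S) ∈ A.verts) (hA : ∀ e ∈ Γ.edges, edgeGraph ι e ≤ A) : Γ ≤ A := by
  refine le_def.2 ⟨fun v hv => ?_, fun e he => (le_def.1 (hA e he)).2 rfl⟩
  rcases (hΓ.reachable hv).cases_tail with rfl | ⟨u, -, x, hux, rfl⟩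
  · exact h1
  · exact (le_def.1 (hA _ hux)).1 (Or.inr rfl)

theorem eq_lambdaGraph_of_edges_eq_empty (hΓ : IsAccessible ι Γ) (hE : Γ.edges = ∅) :
    Γ = lambdaGraph S X :=
  le_antisymm (hΓ.le_of_forall_edgeGraph_le rfl (by simp [hE]))
    (le_def.2 ⟨Set.singleton_subset_iff.2 hΓ.one_mem, Set.empty_subset _⟩)

end IsAccessible

section Generation

variable {S X : Type*} [Monoid S] {ι : X → S} {T : Set (PreGraph S X × S)}
  {Γ : PreGraph S X}

/-- Multiplying the generators along a path of `Γ` from `1` traces out that path. -/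
theorem exists_path_mem (hgen : ∀ x, genElt ι x ∈ T)
    (hmul : ∀ p ∈ T, ∀ q ∈ T, gmul p q ∈ T)
    (hΓ : IsAccessible ι Γ) {u : S} (hu : Relation.ReflTransGen (step ι Γ) 1 u) {x : X}
    (hux : (u, x) ∈ Γ.edges) :
    ∃ P ≤ Γ, (1 : S) ∈ P.verts ∧ edgeGraph ι (u, x) ≤ P ∧ (P, u * ι x) ∈ T := by
  induction hu generalizing x with
  | refl =>
    refine ⟨edgeGraph ι (1, x), hΓ.edgeGraph_le hux, Or.inl rfl, le_rfl, ?_⟩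
    exact genElt_eq_edgeGraph ι x ▸ hgen x
  | tail _ hstep ih =>
    obtain ⟨y, hy, rfl⟩ := hstep
    obtain ⟨P, hPΓ, hP1, -, hPT⟩ := ih hy
    refine ⟨P ⊔ edgeGraph ι (_, x), sup_le hPΓ (hΓ.edgeGraph_le hux), Or.inl hP1,
      le_sup_right, ?_⟩
    exact gmul_genElt ι P _ x ▸ hmul _ hPT _ (hgen x)

theorem supClosed_setOf_mem_one (hmul : ∀ p ∈ T, ∀ q ∈ T, gmul p q ∈ T) :
    SupClosed {A : PreGraph S X | A ≤ Γ ∧ (1 : S) ∈ A.verts ∧ (A, 1) ∈ T} := by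
  rintro A ⟨hAΓ, hA1, hAT⟩ B ⟨hBΓ, -, hBT⟩
  exact ⟨sup_le hAΓ hBΓ, Or.inl hA1, gmul_one_left A B 1 ▸ hmul _ hAT _ hBT⟩

theorem graph_one_mem (hgen : ∀ x, genElt ι x ∈ T)
    (hmul : ∀ p ∈ T, ∀ q ∈ T, gmul p q ∈ T)
    (hplus : ∀ p ∈ T, gplus p ∈ T) (hΓ : IsAccessible ι Γ) (hE : Γ.edges.Nonempty) :
    (Γ, (1 : S)) ∈ T := by
  classical
  have hpath : ∀ e ∈ Γ.edges,
      ∃ A ∈ {A | A ≤ Γ ∧ (1 : S) ∈ A.verts ∧ (A, 1) ∈ T}, edgeGraph ι e ≤ A := by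
    intro e he
    obtain ⟨P, hPΓ, hP1, heP, hPT⟩ :=
      exists_path_mem hgen hmul hΓ (hΓ.reachable (hΓ.ends_mem he).1) he
    exact ⟨P, ⟨hPΓ, hP1, hplus _ hPT⟩, heP⟩
  obtain ⟨e, he⟩ := hE
  obtain ⟨A, hA, -⟩ := hpath e he
  obtain ⟨B, ⟨hBΓ, hB1, hBT⟩, hsup⟩ :=
    Finset.sup_le_of_le_directed _ ⟨A, hA⟩ (supClosed_setOf_mem_one hmul).directedOn
      (hΓ.edges_finite.toFinset.image (edgeGraph ι))
      (Finset.forall_mem_image.2 fun e he => hpath e (hΓ.edges_finite.mem_toFinset.1 he))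
  have hΓB : Γ ≤ B := hΓ.le_of_forall_edgeGraph_le hB1 fun e he =>
    (Finset.le_sup (f := id) (Finset.mem_image_of_mem _ (hΓ.edges_finite.mem_toFinset.2 he))).trans hsup
  rwa [le_antisymm hΓB hBΓ]

theorem mem_of_edges_nonempty (hgen : ∀ x, genElt ι x ∈ T)
    (hmul : ∀ p ∈ T, ∀ q ∈ T, gmul p q ∈ T) (hplus : ∀ p ∈ T, gplus p ∈ T)
    (hΓ : IsAccessible ι Γ) (hE : Γ.edges.Nonempty) {s : S} (hs : s ∈ Γ.verts) :
    (Γ, s) ∈ T := by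
  have hΓT := graph_one_mem hgen hmul hplus hΓ hE
  rcases (hΓ.reachable hs).cases_tail with rfl | ⟨w, hw, x, hwx, rfl⟩
  · exact hΓT
  · obtain ⟨P, hPΓ, -, -, hPT⟩ := exists_path_mem hgen hmul hΓ hw hwx
    simpa only [gmul_one_left, sup_eq_left.2 hPΓ] using hmul _ hΓT _ hPT

theorem MSem_subset (hgen : ∀ x, genElt ι x ∈ T)
    (hmul : ∀ p ∈ T, ∀ q ∈ T, gmul p q ∈ T)
    (hplus : ∀ p ∈ T, gplus p ∈ T) : MSem ι ⊆ T := by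
  rintro ⟨Γ, s⟩ ⟨⟨hΓ, hs⟩, hne⟩
  refine mem_of_edges_nonempty hgen hmul hplus hΓ (Set.nonempty_iff_ne_empty.2 fun hE => ?_) hs
  have hΓ_eq := hΓ.eq_lambdaGraph_of_edges_eq_empty hE
  subst hΓ_eq
  obtain rfl : s = 1 := hs
  exact hne rfl

end Generation

theorem stmt_11_general {S X : Type*} [Monoid S] (ι : X → S) :
    (∀ T : Set (PreGraph S X × S),
      (∀ x, genElt ι x ∈ T) →
      (∀ p ∈ T, ∀ q ∈ T, gmul p q ∈ T) →
      (∀ p ∈ T, gplus p ∈ T) →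
      MSem ι ⊆ T) ∧
    (∀ T : Set (PreGraph S X × S),
      (∀ x, genElt ι x ∈ T) →
      ((lambdaGraph S X, (1 : S)) ∈ T) →
      (∀ p ∈ T, ∀ q ∈ T, gmul p q ∈ T) →
      (∀ p ∈ T, gplus p ∈ T) →
      Mlam ι ⊆ T) := by
  refine ⟨fun T hgen hmul hplus => MSem_subset hgen hmul hplus, ?_⟩
  intro T hgen hlam hmul hplus
  calc Mlam ι ⊆ insert (lambdaGraph S X, 1) (MSem ι) := Set.subset_insert_sdiff_singleton _ _
    _ ⊆ T := Set.insert_subset hlam (MSem_subset hgen hmul hplus)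

/-- `M(S,X)` is generated as a `(·,⁺)`-algebra by the elements
`(Γ_x, ι x)`, `x ∈ X`, and `M^λ(S,X)` is generated by these together with the
identity element `(Γ_λ, λ)`. -/
theorem stmt_11 {S X : Type*} [Monoid S] (ι : X → S)
    (hgen : Submonoid.closure (Set.range ι) = ⊤) :
    (∀ T : Set (PreGraph S X × S),
      (∀ x, genElt ι x ∈ T) →
      (∀ p ∈ T, ∀ q ∈ T, gmul p q ∈ T) →
      (∀ p ∈ T, gplus p ∈ T) →
      MSem ι ⊆ T) ∧
    (∀ T : Set (PreGraph S X × S),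
      (∀ x, genElt ι x ∈ T) →
      ((lambdaGraph S X, (1 : S)) ∈ T) →
      (∀ p ∈ T, ∀ q ∈ T, gmul p q ∈ T) →
      (∀ p ∈ T, gplus p ∈ T) →
      Mlam ι ⊆ T) :=
  stmt_11_general ι
end

section
/- Let R be a restriction semigroup and G ⊆ R a subset such that the least subset of R containing G and closed under multiplication and ⁺ is R itself. Then: (1) every element u ∈ R which is not a projection can be written as u = e·v, where e is a projection of R and v is a product of finitely many elements of G; (2) every projection u of R can be written as u = a₁⁺ · a₂⁺ ⋯ aₙ⁺, where n ≥ 1 and each aᵢ is a product of finitely many elements of G. -/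
open Pointwise

section RestrictionSemigroup

variable {R : Type*} [Semigroup R] {plus : R → R}

def projClosure (plus : R → R) (C : Subsemigroup R) : Subsemigroup R :=
  Subsemigroup.closure {b : R | ∃ a ∈ C, b = plus a}

theorem plus_mul_plus_self (h1 : ∀ x : R, plus x * x = x)
    (h3 : ∀ x y : R, plus (plus x * y) = plus x * plus y) (x : R) :
    plus x * plus x = plus x := by
  simpa only [h1] using (h3 x x).symm

theorem plus_plus (h1 : ∀ x : R, plus x * x = x)
    (h3 : ∀ x y : R, plus (plus x * y) = plus x * plus y)
    (h4 : ∀ x y : R, x * plus y = plus (x * y) * x) (x : R) :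
    plus (plus x) = plus x := by
  have idem := plus_mul_plus_self h1 h3 x
  calc plus (plus x) = plus x * plus (plus x) := by rw [← h3, idem]
    _ = plus (plus x) * plus x := by rw [h4, idem]
    _ = plus x := h1 _

theorem plus_eq_self_of_mem_projClosure (h1 : ∀ x : R, plus x * x = x)
    (h3 : ∀ x y : R, plus (plus x * y) = plus x * plus y)
    (h4 : ∀ x y : R, x * plus y = plus (x * y) * x) {C : Subsemigroup R} {u : R}
    (hu : u ∈ projClosure plus C) : plus u = u := by
  induction hu using Subsemigroup.closure_induction with
  | mem x hx =>
    obtain ⟨a, -, rfl⟩ := hx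
    exact plus_plus h1 h3 h4 a
  | mul x y _ _ hx hy =>
    calc plus (x * y) = plus (plus x * y) := by rw [hx]
      _ = x * y := by rw [h3, hx, hy]

theorem plus_mul_of_plus_eq_self (h3 : ∀ x y : R, plus (plus x * y) = plus x * plus y)
    {e : R} (he : plus e = e) (v : R) : plus (e * v) = e * plus v := by
  rw [← he, h3, he]

theorem exists_mul_eq_mul_of_mem_projClosure (h4 : ∀ x y : R, x * plus y = plus (x * y) * x)
    {C : Subsemigroup R} {a b : R} (ha : a ∈ C) (hb : b ∈ projClosure plus C) :
    ∃ f ∈ projClosure plus C, a * b = f * a := by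
  induction hb using Subsemigroup.closure_induction with
  | mem x hx =>
    obtain ⟨c, hc, rfl⟩ := hx
    exact ⟨plus (a * c), Subsemigroup.subset_closure ⟨a * c, mul_mem ha hc, rfl⟩, h4 a c⟩
  | mul x y _ _ hx hy =>
    obtain ⟨f₁, hf₁, e₁⟩ := hx
    obtain ⟨f₂, hf₂, e₂⟩ := hy
    refine ⟨f₁ * f₂, mul_mem hf₁ hf₂, ?_⟩
    rw [← mul_assoc, e₁, mul_assoc, e₂, mul_assoc]

def normalForms (plus : R → R) (C : Subsemigroup R) : Set R :=
  (projClosure plus C : Set R) ∪ (projClosure plus C : Set R) * C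

theorem mul_mem_normalForms (h4 : ∀ x y : R, x * plus y = plus (x * y) * x)
    {C : Subsemigroup R} {u w : R} (hu : u ∈ normalForms plus C)
    (hw : w ∈ normalForms plus C) : u * w ∈ normalForms plus C := by
  rcases hu with hu | ⟨e, he, v, hv, rfl⟩ <;> rcases hw with hw | ⟨e', he', v', hv', rfl⟩
  · exact Or.inl (mul_mem hu hw)
  · exact Or.inr ⟨u * e', mul_mem hu he', v', hv', mul_assoc _ _ _⟩
  · obtain ⟨f, hf, hvw⟩ := exists_mul_eq_mul_of_mem_projClosure h4 hv hw
    refine Or.inr ⟨e * f, mul_mem he hf, v, hv, ?_⟩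
    show e * f * v = e * v * w
    rw [mul_assoc, mul_assoc, hvw]
  · obtain ⟨f, hf, hve⟩ := exists_mul_eq_mul_of_mem_projClosure h4 hv he'
    refine Or.inr ⟨e * f, mul_mem he hf, v * v', mul_mem hv hv', ?_⟩
    show e * f * (v * v') = e * v * (e' * v')
    rw [mul_assoc e v, ← mul_assoc v, hve, mul_assoc, mul_assoc]

theorem plus_mem_projClosure_of_mem_normalForms (h1 : ∀ x : R, plus x * x = x)
    (h3 : ∀ x y : R, plus (plus x * y) = plus x * plus y)
    (h4 : ∀ x y : R, x * plus y = plus (x * y) * x) {C : Subsemigroup R} {u : R}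
    (hu : u ∈ normalForms plus C) : plus u ∈ projClosure plus C := by
  rcases hu with hu | ⟨e, he, v, hv, rfl⟩
  · rwa [plus_eq_self_of_mem_projClosure h1 h3 h4 hu]
  · rw [plus_mul_of_plus_eq_self h3 (plus_eq_self_of_mem_projClosure h1 h3 h4 he)]
    exact mul_mem he (Subsemigroup.subset_closure ⟨v, hv, rfl⟩)

theorem subset_normalForms (h1 : ∀ x : R, plus x * x = x) (C : Subsemigroup R) :
    (C : Set R) ⊆ normalForms plus C := fun c hc =>
  Or.inr ⟨plus c, Subsemigroup.subset_closure ⟨c, hc, rfl⟩, c, hc, h1 c⟩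

end RestrictionSemigroup

theorem stmt_12_general {R : Type*} [Semigroup R] (plus : R → R)
    (h1 : ∀ x : R, plus x * x = x)
    (h3 : ∀ x y : R, plus (plus x * y) = plus x * plus y)
    (h4 : ∀ x y : R, x * plus y = plus (x * y) * x)
    (G : Set R)
    (hgen : ∀ T : Set R, G ⊆ T → (∀ a ∈ T, ∀ b ∈ T, a * b ∈ T) →
      (∀ a ∈ T, plus a ∈ T) → T = Set.univ) :
    (∀ u : R, ¬ IsProjection plus u →
      ∃ e v : R, IsProjection plus e ∧ v ∈ Subsemigroup.closure G ∧ u = e * v) ∧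
    (∀ u : R, IsProjection plus u →
      u ∈ Subsemigroup.closure {b : R | ∃ a ∈ Subsemigroup.closure G, b = plus a}) := by
  set C := Subsemigroup.closure G
  have mem_normalForms : ∀ u, u ∈ normalForms plus C := by
    rw [← Set.eq_univ_iff_forall]
    refine hgen _ (Subsemigroup.subset_closure.trans (subset_normalForms h1 C))
      (fun _ ha _ hb => mul_mem_normalForms h4 ha hb) (fun _ ha => Or.inl ?_)
    exact plus_mem_projClosure_of_mem_normalForms h1 h3 h4 ha
  refine ⟨fun u hu => ?_, fun u ⟨a, hua⟩ => ?_⟩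
  · rcases mem_normalForms u with hP | ⟨e, he, v, hv, rfl⟩
    · exact absurd ⟨u, (plus_eq_self_of_mem_projClosure h1 h3 h4 hP).symm⟩ hu
    · exact ⟨e, v, ⟨e, (plus_eq_self_of_mem_projClosure h1 h3 h4 he).symm⟩, hv, rfl⟩
  · rw [hua]
    exact plus_mem_projClosure_of_mem_normalForms h1 h3 h4 (mem_normalForms a)

/-- if a restriction semigroup `R` is generated by `G` as a
`(·,⁺)`-algebra, then (1) every non-projection `u` can be written as `u = e·v`
with `e` a projection and `v` a product of elements of `G`, and (2) every
projection is a product `a₁⁺ ⋯ aₙ⁺` (`n ≥ 1`) where each `aᵢ` is a product of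
elements of `G`. -/
theorem stmt_12 {R : Type*} [Semigroup R] (plus : R → R)
    (h1 : ∀ x : R, plus x * x = x)
    (h2 : ∀ x y : R, plus x * plus y = plus y * plus x)
    (h3 : ∀ x y : R, plus (plus x * y) = plus x * plus y)
    (h4 : ∀ x y : R, x * plus y = plus (x * y) * x)
    (G : Set R)
    (hgen : ∀ T : Set R, G ⊆ T → (∀ a ∈ T, ∀ b ∈ T, a * b ∈ T) →
      (∀ a ∈ T, plus a ∈ T) → T = Set.univ) :
    (∀ u : R, ¬ IsProjection plus u →
      ∃ e v : R, IsProjection plus e ∧ v ∈ Subsemigroup.closure G ∧ u = e * v) ∧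
    (∀ u : R, IsProjection plus u →
      u ∈ Subsemigroup.closure {b : R | ∃ a ∈ Subsemigroup.closure G, b = plus a}) :=
  stmt_12_general plus h1 h3 h4 G hgen
end

section
/- Let F together with a map ι : X → F be a free X-generated F-restriction semigroup. Then the relation σ on F is a congruence of the semigroup F, the quotient F/σ is a monoid whose identity element is the σ-class of the maximum projection λ of F, and F/σ is isomorphic as a monoid to the free monoid X* via an isomorphism sending the σ-class of ι(x) to the one-letter word x for each x ∈ X. -/
/-- `(R; mul, plus)` is a restriction semigroup. -/
def IsRestriction {R : Type*} (mul : R → R → R) (plus : R → R) : Prop :=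
  (∀ x y z, mul (mul x y) z = mul x (mul y z)) ∧
  (∀ x, mul (plus x) x = x) ∧
  (∀ x y, mul (plus x) (plus y) = mul (plus y) (plus x)) ∧
  (∀ x y, plus (mul (plus x) y) = mul (plus x) (plus y)) ∧
  (∀ x y, mul x (plus y) = mul (plus (mul x y)) x)

/-- `(R; mul, plus, m, lam)` is an F-restriction semigroup in the signature
`(·, ⁺, m, λ)`: a restriction semigroup in which `m a` is the maximum element
of the σ-class of `a` and `lam` is the maximum projection. -/
def IsFRestrOps {R : Type*} (mul : R → R → R) (plus m : R → R) (lam : R) : Prop :=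
  IsRestriction mul plus ∧
  (∀ a, SigmaRel mul plus (m a) a ∧
    ∀ t, SigmaRel mul plus t a → NatLe mul plus t (m a)) ∧
  IsProjection plus lam ∧
  (∀ e, IsProjection plus e → NatLe mul plus e lam)

section Aux

variable {F : Type*} {mulF : F → F → F} {plusF mF : F → F} {lamF : F}

lemma plus_idem (hR : IsRestriction mulF plusF) (a : F) :
    mulF (plusF a) (plusF a) = plusF a := by
  obtain ⟨h1, h2, h3, h4, h5⟩ := hR
  have h := h4 a a
  rw [h2 a] at h
  exact h.symm

lemma plus_plus_s13 (hR : IsRestriction mulF plusF) (a : F) :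
    plusF (plusF a) = plusF a := by
  have hi := plus_idem hR a
  obtain ⟨h1, h2, h3, h4, h5⟩ := hR
  have h := h4 a (plusF a)
  rw [hi] at h
  calc plusF (plusF a) = mulF (plusF a) (plusF (plusF a)) := h
    _ = mulF (plusF (plusF a)) (plusF a) := h3 a (plusF a)
    _ = plusF a := h2 (plusF a)

lemma sigma_refl (a : F) : SigmaRel mulF plusF a a :=
  ⟨plusF a, ⟨a, rfl⟩, rfl⟩

lemma sigma_symm {a b : F} (h : SigmaRel mulF plusF a b) : SigmaRel mulF plusF b a := by
  obtain ⟨e, he, hab⟩ := h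
  exact ⟨e, he, hab.symm⟩

lemma sigma_trans (hR : IsRestriction mulF plusF) {a b c : F}
    (hab : SigmaRel mulF plusF a b) (hbc : SigmaRel mulF plusF b c) :
    SigmaRel mulF plusF a c := by
  obtain ⟨h1, h2, h3, h4, h5⟩ := hR
  obtain ⟨e, ⟨p, hp⟩, he⟩ := hab
  obtain ⟨f, ⟨q, hq⟩, hf⟩ := hbc
  refine ⟨mulF f e, ⟨mulF (plusF q) p, by rw [hp, hq, (h4 q p).symm]⟩, ?_⟩
  have comm : mulF f e = mulF e f := by rw [hp, hq]; exact h3 q p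
  calc mulF (mulF f e) a = mulF f (mulF e a) := h1 f e a
    _ = mulF f (mulF e b) := by rw [he]
    _ = mulF (mulF f e) b := (h1 f e b).symm
    _ = mulF (mulF e f) b := by rw [comm]
    _ = mulF e (mulF f b) := h1 e f b
    _ = mulF e (mulF f c) := by rw [hf]
    _ = mulF (mulF e f) c := (h1 e f c).symm
    _ = mulF (mulF f e) c := by rw [comm]

lemma sigma_mul_right (hR : IsRestriction mulF plusF) {a b : F}
    (h : SigmaRel mulF plusF a b) (c : F) :
    SigmaRel mulF plusF (mulF a c) (mulF b c) := by
  obtain ⟨e, he, hab⟩ := h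
  exact ⟨e, he, by rw [← hR.1 e a c, ← hR.1 e b c, hab]⟩

lemma sigma_mul_left (hR : IsRestriction mulF plusF) {c d : F}
    (h : SigmaRel mulF plusF c d) (a : F) :
    SigmaRel mulF plusF (mulF a c) (mulF a d) := by
  obtain ⟨h1, h2, h3, h4, h5⟩ := hR
  obtain ⟨e, ⟨u, hu⟩, hcd⟩ := h
  refine ⟨plusF (mulF a u), ⟨mulF a u, rfl⟩, ?_⟩
  have key : mulF (plusF (mulF a u)) a = mulF a e := by rw [hu]; exact (h5 a u).symm
  calc mulF (plusF (mulF a u)) (mulF a c)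
      = mulF (mulF (plusF (mulF a u)) a) c := (h1 _ a c).symm
    _ = mulF (mulF a e) c := by rw [key]
    _ = mulF a (mulF e c) := h1 a e c
    _ = mulF a (mulF e d) := by rw [hcd]
    _ = mulF (mulF a e) d := (h1 a e d).symm
    _ = mulF (mulF (plusF (mulF a u)) a) d := by rw [key]
    _ = mulF (plusF (mulF a u)) (mulF a d) := h1 _ a d

lemma sigma_congr (hR : IsRestriction mulF plusF) {a b c d : F}
    (hab : SigmaRel mulF plusF a b) (hcd : SigmaRel mulF plusF c d) :
    SigmaRel mulF plusF (mulF a c) (mulF b d) :=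
  sigma_trans hR (sigma_mul_right hR hab c) (sigma_mul_left hR hcd b)

lemma plus_mul_lam (hFR : IsFRestrOps mulF plusF mF lamF) (a : F) :
    mulF (plusF a) lamF = plusF a := by
  have h := hFR.2.2.2 (plusF a) ⟨a, rfl⟩
  rw [NatLe, plus_plus_s13 hFR.1 a] at h
  exact h.symm

lemma plus_sigma_lam (hFR : IsFRestrOps mulF plusF mF lamF) (a : F) :
    SigmaRel mulF plusF (plusF a) lamF :=
  ⟨plusF a, ⟨a, rfl⟩, by rw [plus_idem hFR.1 a, plus_mul_lam hFR a]⟩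

lemma lam_mul_sigma (hFR : IsFRestrOps mulF plusF mF lamF) (a : F) :
    SigmaRel mulF plusF (mulF lamF a) a := by
  refine ⟨plusF a, ⟨a, rfl⟩, ?_⟩
  rw [← hFR.1.1 (plusF a) lamF a, plus_mul_lam hFR a]

lemma mul_lam_sigma (hFR : IsFRestrOps mulF plusF mF lamF) (a : F) :
    SigmaRel mulF plusF (mulF a lamF) a := by
  obtain ⟨u, hu⟩ := hFR.2.2.1
  have h1 := hFR.1.1
  have h5 := hFR.1.2.2.2.2
  refine ⟨plusF (mulF a u), ⟨mulF a u, rfl⟩, ?_⟩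
  have key : mulF a lamF = mulF (plusF (mulF a u)) a := by rw [hu]; exact h5 a u
  calc mulF (plusF (mulF a u)) (mulF a lamF)
      = mulF (plusF (mulF a u)) (mulF (plusF (mulF a u)) a) := by rw [key]
    _ = mulF (mulF (plusF (mulF a u)) (plusF (mulF a u))) a := (h1 _ _ a).symm
    _ = mulF (plusF (mulF a u)) a := by rw [plus_idem hFR.1 (mulF a u)]

/-- Any monoid, with trivial `plus` and identity `m`, is an F-restriction semigroup. -/
lemma monoid_isFRestr {R : Type*} (mul : R → R → R) (one : R)
    (assoc : ∀ x y z, mul (mul x y) z = mul x (mul y z))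
    (onel : ∀ x, mul one x = x) (oner : ∀ x, mul x one = x) :
    IsFRestrOps mul (fun _ => one) id one := by
  refine ⟨⟨assoc, fun x => onel x, fun _ _ => rfl, fun _ _ => (onel one).symm,
    fun x _ => by rw [oner x, onel x]⟩, ?_, ⟨one, rfl⟩, ?_⟩
  · intro a
    refine ⟨⟨one, ⟨one, rfl⟩, rfl⟩, ?_⟩
    rintro t ⟨e, ⟨c, hc⟩, h⟩
    have hc' : e = one := hc
    rw [hc', onel t, onel a] at h
    show t = mul one (id a)
    rw [onel]; exact h
  · rintro e ⟨c, hc⟩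
    have hc' : e = one := hc
    show e = mul one one
    rw [hc', onel]

end Aux

/-- for a free `X`-generated F-restriction semigroup `F`, the
relation σ is a semigroup congruence and `F/σ` is a monoid, with identity the
σ-class of λ, isomorphic to the free monoid `X*` via an isomorphism sending the
σ-class of `ι x` to the one-letter word `x`. (The isomorphism is encoded by a
surjection `π : F → X*` whose fibers are exactly the σ-classes.) -/
theorem stmt_13 {X : Type u} {F : Type v}
    (mulF : F → F → F) (plusF mF : F → F) (lamF : F) (ι : X → F)
    (hFR : IsFRestrOps mulF plusF mF lamF)
    (hfree : ∀ (R : Type (max u v)) (mulR : R → R → R) (plusR mR : R → R)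
      (lamR : R), IsFRestrOps mulR plusR mR lamR → ∀ f : X → R,
      ∃! φ : F → R,
        (∀ a b, φ (mulF a b) = mulR (φ a) (φ b)) ∧
        (∀ a, φ (plusF a) = plusR (φ a)) ∧
        (∀ a, φ (mF a) = mR (φ a)) ∧
        φ lamF = lamR ∧
        (∀ x, φ (ι x) = f x)) :
    -- σ is a congruence of the semigroup F:
    (∀ a b c d, SigmaRel mulF plusF a b → SigmaRel mulF plusF c d →
      SigmaRel mulF plusF (mulF a c) (mulF b d)) ∧
    -- F/σ is a monoid with identity [λ]_σ, isomorphic to X*: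
    ∃ π : F → FreeMonoid X,
      Function.Surjective π ∧
      (∀ a b, π (mulF a b) = π a * π b) ∧
      π lamF = 1 ∧
      (∀ a b, (π a = π b ↔ SigmaRel mulF plusF a b)) ∧
      (∀ x, π (ι x) = FreeMonoid.of x) := by
  have hR : IsRestriction mulF plusF := hFR.1
  refine ⟨fun a b c d hab hcd => sigma_congr hR hab hcd, ?_⟩
  -- The F-restriction structure on `ULift (FreeMonoid X)`:
  set M : Type (max u v) := ULift.{v} (FreeMonoid X) with hM
  have hMops : IsFRestrOps (fun a b : M => ⟨a.down * b.down⟩) (fun _ => (⟨1⟩ : M))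
      id (⟨1⟩ : M) := by
    refine monoid_isFRestr _ _ ?_ ?_ ?_
    · intro x y z; show (⟨x.down * y.down * z.down⟩ : M) = ⟨x.down * (y.down * z.down)⟩
      rw [mul_assoc]
    · intro x; show (⟨1 * x.down⟩ : M) = x; rw [one_mul]
    · intro x; show (⟨x.down * 1⟩ : M) = x; rw [mul_one]
  obtain ⟨φ, ⟨φmul, φplus, φm, φlam, φι⟩, -⟩ :=
    hfree M _ _ _ _ hMops (fun x => ⟨FreeMonoid.of x⟩)
  set π : F → FreeMonoid X := fun a => (φ a).down with hπ
  have πmul : ∀ a b, π (mulF a b) = π a * π b := fun a b => congrArg ULift.down (φmul a b)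
  have πplus : ∀ a, π (plusF a) = 1 := fun a => congrArg ULift.down (φplus a)
  have πm : ∀ a, π (mF a) = π a := fun a => congrArg ULift.down (φm a)
  have πlam : π lamF = 1 := congrArg ULift.down φlam
  have πι : ∀ x, π (ι x) = FreeMonoid.of x := fun x => congrArg ULift.down (φι x)
  -- σ-related elements have equal images:
  have forward : ∀ a b, SigmaRel mulF plusF a b → π a = π b := by
    rintro a b ⟨e, ⟨u, hu⟩, he⟩
    have : π (mulF e a) = π (mulF e b) := by rw [he]
    rw [πmul, πmul, hu, πplus, one_mul, one_mul] at this
    exact this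
  -- Surjectivity:
  have surj : Function.Surjective π := by
    intro l
    induction l using FreeMonoid.recOn with
    | one => exact ⟨lamF, πlam⟩
    | of_mul x xs h =>
      obtain ⟨a, ha⟩ := h
      exact ⟨mulF (ι x) a, by rw [πmul, πι, ha]⟩
  -- The quotient F/σ:
  letI S : Setoid F := ⟨SigmaRel mulF plusF,
    ⟨sigma_refl, fun h => sigma_symm h, fun h h' => sigma_trans hR h h'⟩⟩
  have mulQwd : ∀ {a b : F}, a ≈ b → ∀ {c d : F}, c ≈ d →
      (Quotient.mk S (mulF a c)) = Quotient.mk S (mulF b d) := by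
    intro a b hab c d hcd
    exact Quotient.sound (sigma_congr hR hab hcd)
  let mulQ : Quotient S → Quotient S → Quotient S :=
    Quotient.lift₂ (fun a b => Quotient.mk S (mulF a b))
      (fun a c b d hab hcd => mulQwd hab hcd)
  set Q : Type (max u v) := ULift.{u} (Quotient S) with hQ
  let mulU : Q → Q → Q := fun a b => ⟨mulQ a.down b.down⟩
  let oneU : Q := ⟨Quotient.mk S lamF⟩
  have hQops : IsFRestrOps mulU (fun _ => oneU) id oneU := by
    refine monoid_isFRestr _ _ ?_ ?_ ?_
    · rintro ⟨x⟩ ⟨y⟩ ⟨z⟩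
      induction x using Quotient.inductionOn with | h a =>
      induction y using Quotient.inductionOn with | h b =>
      induction z using Quotient.inductionOn with | h c =>
      show (⟨Quotient.mk S (mulF (mulF a b) c)⟩ : Q) = ⟨Quotient.mk S (mulF a (mulF b c))⟩
      rw [hR.1 a b c]
    · rintro ⟨x⟩
      induction x using Quotient.inductionOn with | h a =>
      show (⟨Quotient.mk S (mulF lamF a)⟩ : Q) = ⟨Quotient.mk S a⟩
      exact congrArg ULift.up (Quotient.sound (lam_mul_sigma hFR a))
    · rintro ⟨x⟩
      induction x using Quotient.inductionOn with | h a =>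
      show (⟨Quotient.mk S (mulF a lamF)⟩ : Q) = ⟨Quotient.mk S a⟩
      exact congrArg ULift.up (Quotient.sound (mul_lam_sigma hFR a))
  -- the canonical quotient map
  let q : F → Q := fun a => ⟨Quotient.mk S a⟩
  have hq : (∀ a b, q (mulF a b) = mulU (q a) (q b)) ∧
      (∀ a, q (plusF a) = oneU) ∧ (∀ a, q (mF a) = id (q a)) ∧
      q lamF = oneU ∧ (∀ x, q (ι x) = ⟨Quotient.mk S (ι x)⟩) := by
    refine ⟨fun a b => rfl, fun a => ?_, fun a => ?_, rfl, fun x => rfl⟩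
    · exact congrArg ULift.up (Quotient.sound (plus_sigma_lam hFR a))
    · exact congrArg ULift.up (Quotient.sound ((hFR.2.1 a).1))
  -- the map through the free monoid
  let h : FreeMonoid X → Quotient S := fun l =>
    (FreeMonoid.toList l).foldr (fun x r => mulQ (Quotient.mk S (ι x)) r)
      (Quotient.mk S lamF)
  have hone : h 1 = Quotient.mk S lamF := by
    show (FreeMonoid.toList 1).foldr _ _ = _
    rw [FreeMonoid.toList_one]
    rfl
  have honel : ∀ r : Quotient S, mulQ (Quotient.mk S lamF) r = r := by
    intro r
    induction r using Quotient.inductionOn with | h a =>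
    exact Quotient.sound (lam_mul_sigma hFR a)
  have assocQ : ∀ x y z : Quotient S, mulQ (mulQ x y) z = mulQ x (mulQ y z) := by
    intro x y z
    induction x using Quotient.inductionOn with | h a =>
    induction y using Quotient.inductionOn with | h b =>
    induction z using Quotient.inductionOn with | h c =>
    show Quotient.mk S (mulF (mulF a b) c) = Quotient.mk S (mulF a (mulF b c))
    rw [hR.1 a b c]
  have key : ∀ (L : List X) (r : Quotient S),
      L.foldr (fun x r => mulQ (Quotient.mk S (ι x)) r) r =
      mulQ (L.foldr (fun x r => mulQ (Quotient.mk S (ι x)) r) (Quotient.mk S lamF)) r := by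
    intro L r
    induction L with
    | nil => exact (honel r).symm
    | cons x L ih =>
      show mulQ (Quotient.mk S (ι x)) _ = mulQ (mulQ (Quotient.mk S (ι x)) _) r
      rw [ih, assocQ]
  have hmul : ∀ a b : FreeMonoid X, h (a * b) = mulQ (h a) (h b) := by
    intro a b
    show (FreeMonoid.toList (a * b)).foldr _ _ = _
    rw [FreeMonoid.toList_mul, List.foldr_append]
    exact key (FreeMonoid.toList a) (h b)
  have hof : ∀ x : X, h (FreeMonoid.of x) = Quotient.mk S (ι x) := by
    intro x
    show (FreeMonoid.toList (FreeMonoid.of x)).foldr _ _ = _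
    rw [FreeMonoid.toList_of]
    show mulQ (Quotient.mk S (ι x)) (Quotient.mk S lamF) = Quotient.mk S (ι x)
    exact Quotient.sound (mul_lam_sigma hFR (ι x))
  -- ψ = h ∘ π also satisfies the morphism conditions
  let ψ : F → Q := fun a => ⟨h (π a)⟩
  have hψ : (∀ a b, ψ (mulF a b) = mulU (ψ a) (ψ b)) ∧
      (∀ a, ψ (plusF a) = oneU) ∧ (∀ a, ψ (mF a) = id (ψ a)) ∧
      ψ lamF = oneU ∧ (∀ x, ψ (ι x) = ⟨Quotient.mk S (ι x)⟩) := by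
    refine ⟨fun a b => ?_, fun a => ?_, fun a => ?_, ?_, fun x => ?_⟩
    · show (⟨h (π (mulF a b))⟩ : Q) = ⟨mulQ (h (π a)) (h (π b))⟩
      rw [πmul, hmul]
    · show (⟨h (π (plusF a))⟩ : Q) = oneU
      rw [πplus a, hone]
    · show (⟨h (π (mF a))⟩ : Q) = (⟨h (π a)⟩ : Q)
      rw [πm a]
    · show (⟨h (π lamF)⟩ : Q) = oneU
      rw [πlam, hone]
    · show (⟨h (π (ι x))⟩ : Q) = ⟨Quotient.mk S (ι x)⟩
      rw [πι x, hof x]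
  -- uniqueness from freeness: q = ψ
  obtain ⟨φ0, -, huniq⟩ := hfree Q mulU (fun _ => oneU) id oneU hQops
    (fun x => ⟨Quotient.mk S (ι x)⟩)
  have hqψ : q = ψ := (huniq q hq).trans (huniq ψ hψ).symm
  refine ⟨π, surj, πmul, πlam, fun a b => ⟨fun hab => ?_, forward a b⟩, πι⟩
  have : q a = q b := by
    rw [hqψ]
    show (⟨h (π a)⟩ : Q) = ⟨h (π b)⟩
    rw [hab]
  exact Quotient.exact (congrArg ULift.down this)
end

section
/- Let ρ be the least (·,⁺)-congruence on M(X*, X ∪ X̄*) containing N = N₁ ∪ N₂ ∪ N₃. Then for all (A,s), (B,t) ∈ M(X*, X ∪ X̄*): (A,s) ρ (B,t) if and only if s = t and A^∧ = B^∧. -/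
/-- The label alphabet `X ∪ X̄*`, where `Sum.inl x` is the letter `x ∈ X` and
`Sum.inr u` is the extra generator `ū` for `u ∈ X*`. -/
abbrev LabelT (X : Type*) := X ⊕ FreeMonoid X

/-- Elements of the Gould expansion of `X*` over `X ∪ X̄*`. -/
abbrev EltT (X : Type*) := PreGraph (FreeMonoid X) (LabelT X) × FreeMonoid X

/-- The generating map `X ∪ X̄* → X*`: `x ↦ x`, `ū ↦ u`. -/
def iotaL (X : Type*) : LabelT X → FreeMonoid X := Sum.elim FreeMonoid.of id

/-- The element `ū = (Γ_ū, u)` of the Gould expansion. -/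
def barElt {X : Type*} (u : FreeMonoid X) : EltT X :=
  (⟨{1, u}, {((1 : FreeMonoid X), (Sum.inr u : LabelT X))}⟩, u)

/-- The element `x = (Γ_x, x)` of the Gould expansion, for `x ∈ X`. -/
def xElt {X : Type*} (x : X) : EltT X :=
  (⟨{1, FreeMonoid.of x}, {((1 : FreeMonoid X), (Sum.inl x : LabelT X))}⟩,
    FreeMonoid.of x)

/-- The set of relations `N = N₁ ∪ N₂ ∪ N₃`:
`N₁ = {(ū, λ̄·ū) : u ≠ λ}`, `N₂ = {(x, x⁺·x̄) : x ∈ X}` and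
`N₃ = {(ū·v̄, (ū·v̄)⁺·(uv)‾) : u,v ≠ λ}`. -/
def NRel {X : Type*} (p q : EltT X) : Prop :=
  (∃ u : FreeMonoid X, u ≠ 1 ∧ p = barElt u ∧
    q = gmul (barElt (1 : FreeMonoid X)) (barElt u)) ∨
  (∃ x : X, p = xElt x ∧
    q = gmul (gplus (xElt x)) (barElt (FreeMonoid.of x))) ∨
  (∃ u v : FreeMonoid X, u ≠ 1 ∧ v ≠ 1 ∧ p = gmul (barElt u) (barElt v) ∧
    q = gmul (gplus (gmul (barElt u) (barElt v))) (barElt (u * v)))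

/-- `r` is a `(·,⁺)`-congruence on the subset `M` of the Gould expansion. -/
def IsCongOn {S X : Type*} [Mul S] [One S] (M : Set (PreGraph S X × S))
    (r : (PreGraph S X × S) → (PreGraph S X × S) → Prop) : Prop :=
  (∀ p ∈ M, r p p) ∧
  (∀ p q, r p q → r q p) ∧
  (∀ p q s, r p q → r q s → r p s) ∧
  (∀ p q p' q', p ∈ M → q ∈ M → p' ∈ M → q' ∈ M → r p q → r p' q' →
    r (gmul p p') (gmul q q')) ∧
  (∀ p q, p ∈ M → q ∈ M → r p q → r (gplus p) (gplus q))

/-- The least `(·,⁺)`-congruence on `M` containing the set of relations `N`. -/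
def CongGen {S X : Type*} [Mul S] [One S] (M : Set (PreGraph S X × S))
    (N : (PreGraph S X × S) → (PreGraph S X × S) → Prop)
    (p q : PreGraph S X × S) : Prop :=
  ∀ r, IsCongOn M r → (∀ a b, N a b → r a b) → r p q

/-- The congruence `ρ_N` on `M(X*, X ∪ X̄*)`. -/
def rhoN (X : Type*) (p q : EltT X) : Prop :=
  CongGen (MSem (iotaL X)) NRel p q

/-- An edge set `D` is (`ρ`-)closed under the transformations (T1)–(T3):
(T1) an edge `(v, ū, vu)` forces the loop `(v, λ̄, v)`;
(T2) an edge `(v, x, vx)` forces the edge `(v, x̄, vx)`;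
(T3) edges `(w, ū, wu)` and `(wu, v̄, wuv)` force the edge `(w, uv‾, wuv)`. -/
def ClosedE {X : Type*} (D : Set (FreeMonoid X × LabelT X)) : Prop :=
  (∀ (v : FreeMonoid X) (u : FreeMonoid X),
    (v, (Sum.inr u : LabelT X)) ∈ D → (v, (Sum.inr 1 : LabelT X)) ∈ D) ∧
  (∀ (v : FreeMonoid X) (x : X),
    (v, (Sum.inl x : LabelT X)) ∈ D → (v, (Sum.inr (FreeMonoid.of x) : LabelT X)) ∈ D) ∧
  (∀ (w u v' : FreeMonoid X),
    (w, (Sum.inr u : LabelT X)) ∈ D → (w * u, (Sum.inr v' : LabelT X)) ∈ D →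
      (w, (Sum.inr (u * v') : LabelT X)) ∈ D)

/-- The closure `Γ^∧` of a subgraph: it has the same vertices, and its edge set
is the least closed edge set containing the edges of `Γ`. -/
def closG {X : Type*} (G : PreGraph (FreeMonoid X) (LabelT X)) :
    PreGraph (FreeMonoid X) (LabelT X) :=
  ⟨G.verts, ⋂₀ {D | G.edges ⊆ D ∧ ClosedE D}⟩

section Infra
variable {X : Type*}

/-- Derivation of edges by the closure rules (T1)-(T3). -/
inductive Der (E : Set (FreeMonoid X × LabelT X)) : FreeMonoid X × LabelT X → Prop
  | base {e} (h : e ∈ E) : Der E e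
  | t1 {v u} (h : Der E (v, Sum.inr u)) : Der E (v, Sum.inr 1)
  | t2 {v x} (h : Der E (v, Sum.inl x)) : Der E (v, Sum.inr (FreeMonoid.of x))
  | t3 {w u v'} (h1 : Der E (w, Sum.inr u)) (h2 : Der E (w * u, Sum.inr v')) :
      Der E (w, Sum.inr (u * v'))

lemma Der.mono {E F : Set (FreeMonoid X × LabelT X)} (hEF : E ⊆ F) {e} (h : Der E e) :
    Der F e := by
  induction h with
  | base h => exact .base (hEF h)
  | t1 _ ih => exact .t1 ih
  | t2 _ ih => exact .t2 ih
  | t3 _ _ ih1 ih2 => exact .t3 ih1 ih2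

lemma Der.into {E D : Set (FreeMonoid X × LabelT X)} (hD : ClosedE D) (hED : E ⊆ D)
    {e} (h : Der E e) : e ∈ D := by
  induction h with
  | base h => exact hED h
  | t1 _ ih => exact hD.1 _ _ ih
  | t2 _ ih => exact hD.2.1 _ _ ih
  | t3 _ _ ih1 ih2 => exact hD.2.2 _ _ _ ih1 ih2

lemma closedE_der (E : Set (FreeMonoid X × LabelT X)) : ClosedE {e | Der E e} :=
  ⟨fun _ _ h => .t1 h, fun _ _ h => .t2 h, fun _ _ _ h1 h2 => .t3 h1 h2⟩

lemma closG_eq (G : PreGraph (FreeMonoid X) (LabelT X)) :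
    closG G = ⟨G.verts, {e | Der G.edges e}⟩ := by
  unfold closG
  congr 1
  apply subset_antisymm
  · exact Set.sInter_subset_of_mem ⟨fun e he => .base he, closedE_der _⟩
  · intro e he D hD
    exact Der.into hD.2 hD.1 he

lemma Der.idem {E F : Set (FreeMonoid X × LabelT X)} (h : ∀ e ∈ E, Der F e) {e}
    (hd : Der E e) : Der F e :=
  Der.into (closedE_der F) h hd

end Infra
section Infra2
variable {X : Type*}

@[simp] lemma iotaL_inr (u : FreeMonoid X) : iotaL X (Sum.inr u) = u := rfl
@[simp] lemma iotaL_inl (x : X) : iotaL X (Sum.inl x) = FreeMonoid.of x := rfl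

lemma PreGraph.ext' {S Y : Type*} {A B : PreGraph S Y} (h1 : A.verts = B.verts)
    (h2 : A.edges = B.edges) : A = B := by
  cases A; cases B; cases h1; cases h2; rfl

/-- Derivations are equivariant under left translation. -/
lemma Der.trans_im {F : Set (FreeMonoid X × LabelT X)} (s : FreeMonoid X) {e}
    (h : Der F e) : Der ((fun e => (s * e.1, e.2)) '' F) (s * e.1, e.2) := by
  induction h with
  | base h => exact .base ⟨_, h, rfl⟩
  | t1 _ ih => exact .t1 ih
  | t2 _ ih => exact .t2 ih
  | @t3 w u v' _ _ ih1 ih2 =>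
    exact .t3 ih1 (by simpa only [mul_assoc] using ih2)

lemma der_union_clos (E F : Set (FreeMonoid X × LabelT X)) (s : FreeMonoid X) :
    {e | Der (E ∪ (fun e => (s * e.1, e.2)) '' F) e} =
    {e | Der ({e | Der E e} ∪ (fun e => (s * e.1, e.2)) '' {e | Der F e}) e} := by
  apply subset_antisymm <;> intro e he
  · refine Der.mono ?_ he
    exact Set.union_subset_union (fun e h => Der.base h)
      (Set.image_mono (fun e h => Der.base h))
  · refine Der.idem ?_ he
    intro e' he'
    rcases he' with h | ⟨e'', he'', rfl⟩
    · exact h.mono Set.subset_union_left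
    · exact (he''.trans_im s).mono Set.subset_union_right

/-- The closure of a product graph depends only on the closures of the factors. -/
lemma closG_gmul (A B : PreGraph (FreeMonoid X) (LabelT X)) (s : FreeMonoid X) :
    closG (A.union (PreGraph.trans s B)) =
    closG ((closG A).union (PreGraph.trans s (closG B))) := by
  rw [closG_eq, closG_eq, closG_eq, closG_eq]
  apply PreGraph.ext'
  · rfl
  · exact der_union_clos A.edges B.edges s

end Infra2
section Forward
variable {X : Type*}

lemma clos_eq_of {E1 E2 : Set (FreeMonoid X × LabelT X)}
    (h1 : ∀ e ∈ E1, Der E2 e) (h2 : ∀ e ∈ E2, Der E1 e) :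
    {e | Der E1 e} = {e | Der E2 e} :=
  subset_antisymm (fun _ he => he.idem h1) (fun _ he => he.idem h2)

/-- The relation "same second component and same closure". -/
def rEq (p q : EltT X) : Prop := p.2 = q.2 ∧ closG p.1 = closG q.1

lemma rEq_cong : IsCongOn (MSem (iotaL X)) (rEq (X := X)) := by
  refine ⟨fun p _ => ⟨rfl, rfl⟩, fun p q h => ⟨h.1.symm, h.2.symm⟩,
    fun p q s h1 h2 => ⟨h1.1.trans h2.1, h1.2.trans h2.2⟩, ?_, ?_⟩
  · rintro p q p' q' _ _ _ _ ⟨h1, h2⟩ ⟨h3, h4⟩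
    constructor
    · simp only [gmul]; rw [h1, h3]
    · show closG (p.1.union (PreGraph.trans p.2 p'.1)) = _
      rw [closG_gmul, h2, h4, h1, ← closG_gmul]
      rfl
  · rintro p q _ _ ⟨h1, h2⟩
    exact ⟨rfl, h2⟩

lemma rEq_of_NRel (p q : EltT X) (h : NRel p q) : rEq p q := by
  rcases h with ⟨u, hu, rfl, rfl⟩ | ⟨x, rfl, rfl⟩ | ⟨u, v, hu, hv, rfl, rfl⟩
  · constructor
    · simp [barElt, gmul]
    · rw [closG_eq, closG_eq]
      apply PreGraph.ext'
      · show ({1, u} : Set (FreeMonoid X)) =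
          ({1, 1} : Set (FreeMonoid X)) ∪ (1 * ·) '' {1, u}
        ext w; simp [barElt, PreGraph.union, PreGraph.trans]; tauto
      · apply clos_eq_of
        · rintro e he
          apply Der.base
          simp only [barElt, gmul, PreGraph.union, PreGraph.trans] at he ⊢
          right; exact ⟨e, he, by simp⟩
        · rintro e he
          simp only [barElt, gmul, PreGraph.union, PreGraph.trans,
            Set.image_singleton, Set.mem_union, Set.mem_singleton_iff] at he
          rcases he with rfl | rfl
          · exact Der.t1 (u := u) (.base (by simp [barElt]))
          · exact .base (by simp [barElt])
  · constructor
    · simp [xElt, barElt, gmul, gplus]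
    · rw [closG_eq, closG_eq]
      apply PreGraph.ext'
      · show ({1, FreeMonoid.of x} : Set (FreeMonoid X)) = _
        ext w
        simp [xElt, barElt, gmul, gplus, PreGraph.union, PreGraph.trans]
        try tauto
      · apply clos_eq_of
        · rintro e he
          apply Der.base
          simp only [xElt, barElt, gmul, gplus, PreGraph.union, PreGraph.trans] at he ⊢
          left; exact he
        · rintro e he
          simp only [xElt, barElt, gmul, gplus, PreGraph.union, PreGraph.trans,
            Set.image_singleton, Set.mem_union, Set.mem_singleton_iff] at he
          rcases he with rfl | rfl
          · exact .base (by simp [xElt])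
          · exact Der.t2 (.base (by simp [xElt]))
  · constructor
    · simp [barElt, gmul, gplus]
    · rw [closG_eq, closG_eq]
      apply PreGraph.ext'
      · ext w
        simp [barElt, gmul, gplus, PreGraph.union, PreGraph.trans]
        try tauto
      · apply clos_eq_of
        · rintro e he
          apply Der.base
          simp only [barElt, gmul, gplus, PreGraph.union, PreGraph.trans] at he ⊢
          left; exact he
        · rintro e he
          simp only [barElt, gmul, gplus, PreGraph.union, PreGraph.trans,
            Set.image_singleton, Set.mem_union, Set.mem_singleton_iff] at he
          rcases he with (rfl | rfl) | rfl
          · exact .base (by simp [barElt, gmul, PreGraph.union, PreGraph.trans])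
          · exact .base (by simp [barElt, gmul, PreGraph.union, PreGraph.trans])
          · have h1 : Der ((gmul (barElt u) (barElt v)).1.edges)
                ((1 : FreeMonoid X), (Sum.inr u : LabelT X)) :=
              .base (by simp [barElt, gmul, PreGraph.union, PreGraph.trans])
            have h2 : Der ((gmul (barElt u) (barElt v)).1.edges)
                ((1 * u : FreeMonoid X), (Sum.inr v : LabelT X)) :=
              .base (by simp [barElt, gmul, PreGraph.union, PreGraph.trans])
            have := Der.t3 h1 h2
            simpa using this

end Forward
section Members
variable {X : Type*}

def insertE (G : PreGraph (FreeMonoid X) (LabelT X)) (e : FreeMonoid X × LabelT X) :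
    PreGraph (FreeMonoid X) (LabelT X) := ⟨G.verts, insert e G.edges⟩

lemma ne_lambda_of_mem {p : EltT X} (hp : p ∈ MSem (iotaL X)) : p.1 ≠ lambdaGraph _ _ := by
  rintro h
  rcases hp with ⟨⟨hacc, hmem⟩, hne⟩
  apply hne
  have : p.2 = 1 := by rw [h] at hmem; exact hmem
  simp only [Set.mem_singleton_iff]
  exact Prod.ext h this

lemma mem_of_vert {A : PreGraph (FreeMonoid X) (LabelT X)} {s v : FreeMonoid X}
    (hA : (A, s) ∈ MSem (iotaL X)) (hv : v ∈ A.verts) : (A, v) ∈ MSem (iotaL X) := by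
  refine ⟨⟨hA.1.1, hv⟩, ?_⟩
  intro h
  exact ne_lambda_of_mem hA (congrArg Prod.fst h)

lemma barElt_mem (u : FreeMonoid X) : barElt u ∈ MSem (iotaL X) := by
  constructor
  · refine ⟨⟨?_, ?_, ?_, ?_, ?_⟩, ?_⟩
    · exact (Set.finite_singleton _).insert _
    · exact Set.finite_singleton _
    · rintro e he
      simp only [barElt, Set.mem_singleton_iff] at he
      subst he
      simp [barElt]
    · simp [barElt]
    · rintro v hv
      simp only [barElt, Set.mem_insert_iff, Set.mem_singleton_iff] at hv
      rcases hv with rfl | rfl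
      · exact .refl
      · exact Relation.ReflTransGen.single ⟨Sum.inr v, by simp [barElt], by simp⟩
    · simp [barElt]
  · intro h
    simp only [Set.mem_singleton_iff] at h
    have := congrArg (fun z : EltT X => z.1.edges) h
    exact absurd this (by simp [barElt, lambdaGraph])

lemma xElt_mem (x : X) : xElt x ∈ MSem (iotaL X) := by
  constructor
  · refine ⟨⟨?_, ?_, ?_, ?_, ?_⟩, ?_⟩
    · exact (Set.finite_singleton _).insert _
    · exact Set.finite_singleton _
    · rintro e he
      simp only [xElt, Set.mem_singleton_iff] at he
      subst he
      simp [xElt]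
    · simp [xElt]
    · rintro v hv
      simp only [xElt, Set.mem_insert_iff, Set.mem_singleton_iff] at hv
      rcases hv with rfl | rfl
      · exact .refl
      · exact Relation.ReflTransGen.single ⟨Sum.inl x, by simp [xElt], by simp⟩
    · simp [xElt]
  · intro h
    simp only [Set.mem_singleton_iff] at h
    have := congrArg (fun z : EltT X => z.1.edges) h
    exact absurd this (by simp [xElt, lambdaGraph])

lemma step_mono {G H : PreGraph (FreeMonoid X) (LabelT X)} (h : G.edges ⊆ H.edges)
    {a b : FreeMonoid X} (hs : PreGraph.step (iotaL X) G a b) :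
    PreGraph.step (iotaL X) H a b := by
  obtain ⟨x, hx, rfl⟩ := hs
  exact ⟨x, h hx, rfl⟩

lemma gmul_mem {p q : EltT X} (hp : p ∈ MSem (iotaL X)) (hq : q ∈ MSem (iotaL X)) :
    gmul p q ∈ MSem (iotaL X) := by
  obtain ⟨⟨⟨hVf, hEf, hend, h1, hreach⟩, hs⟩, hne⟩ := hp
  obtain ⟨⟨⟨hVf', hEf', hend', h1', hreach'⟩, hs'⟩, hne'⟩ := hq
  constructor
  · refine ⟨⟨hVf.union (hVf'.image _), hEf.union (hEf'.image _), ?_, Or.inl h1, ?_⟩, ?_⟩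
    · rintro e (he | ⟨e', he', rfl⟩)
      · exact ⟨Or.inl (hend e he).1, Or.inl (hend e he).2⟩
      · refine ⟨Or.inr ⟨e'.1, (hend' e' he').1, rfl⟩, Or.inr ⟨e'.1 * iotaL X e'.2, (hend' e' he').2, ?_⟩⟩
        simp [mul_assoc]
    · rintro v (hv | ⟨w, hw, rfl⟩)
      · exact Relation.ReflTransGen.mono (fun a b => step_mono Set.subset_union_left) _ _ (hreach v hv)
      · have path1 : Relation.ReflTransGen (PreGraph.step (iotaL X) (p.1.union (PreGraph.trans p.2 q.1))) 1 p.2 :=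
          Relation.ReflTransGen.mono (fun a b => step_mono Set.subset_union_left) _ _ (hreach p.2 hs)
        have path2 : Relation.ReflTransGen (PreGraph.step (iotaL X) (p.1.union (PreGraph.trans p.2 q.1))) p.2 (p.2 * w) := by
          have := hreach' w hw
          have lift := Relation.ReflTransGen.lift (r := PreGraph.step (iotaL X) q.1)
            (p := PreGraph.step (iotaL X) (p.1.union (PreGraph.trans p.2 q.1))) (p.2 * ·)
            (fun a b h => by
              obtain ⟨x, hx, hb⟩ := h
              exact ⟨x, Or.inr ⟨(a, x), hx, rfl⟩, by rw [hb, mul_assoc]⟩) _ _ this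
          simpa [Function.onFun] using lift
        exact path1.trans path2
    · simp only [gmul]
      exact Or.inr ⟨q.2, hs', rfl⟩
  · intro h
    simp only [Set.mem_singleton_iff] at h
    apply ne_lambda_of_mem ⟨⟨⟨hVf, hEf, hend, h1, hreach⟩, hs⟩, hne⟩
    have hv := congrArg (fun z => z.1.verts) h
    have he := congrArg (fun z => z.1.edges) h
    simp only [gmul, PreGraph.union, lambdaGraph] at hv he
    apply PreGraph.ext'
    · apply subset_antisymm
      · exact fun z hz => hv.le (Or.inl hz)
      · intro z hz
        simp only [lambdaGraph, Set.mem_singleton_iff] at hz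
        subst hz
        exact h1
    · have hsub : p.1.edges ⊆ (∅ : Set (FreeMonoid X × LabelT X)) :=
        fun z hz => he.le (Or.inl hz)
      exact Set.subset_empty_iff.mp hsub

lemma gplus_mem {p : EltT X} (hp : p ∈ MSem (iotaL X)) : gplus p ∈ MSem (iotaL X) := by
  refine ⟨⟨hp.1.1, hp.1.1.2.2.2.1⟩, ?_⟩
  intro h
  exact ne_lambda_of_mem hp (congrArg Prod.fst h)

lemma insertE_mem {A : PreGraph (FreeMonoid X) (LabelT X)} {s : FreeMonoid X}
    {e : FreeMonoid X × LabelT X}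
    (hA : (A, s) ∈ MSem (iotaL X)) (h1 : e.1 ∈ A.verts) (h2 : e.1 * iotaL X e.2 ∈ A.verts) :
    (insertE A e, s) ∈ MSem (iotaL X) := by
  obtain ⟨⟨⟨hVf, hEf, hend, hone, hreach⟩, hs⟩, hne⟩ := hA
  constructor
  · refine ⟨⟨hVf, hEf.insert _, ?_, hone, ?_⟩, hs⟩
    · rintro e' (rfl | he')
      · exact ⟨h1, h2⟩
      · exact hend e' he'
    · intro v hv
      exact Relation.ReflTransGen.mono (fun a b => step_mono (Set.subset_insert _ _)) _ _ (hreach v hv)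
  · intro h
    simp only [Set.mem_singleton_iff, Prod.mk.injEq] at h
    have := congrArg PreGraph.edges h.1
    simp only [insertE, lambdaGraph] at this
    exact absurd this (Set.insert_nonempty _ _).ne_empty

end Members
section Rho
variable {X : Type*}

lemma rho_refl {p : EltT X} (hp : p ∈ MSem (iotaL X)) : rhoN X p p :=
  fun _ hr _ => hr.1 _ hp

lemma rho_symm {p q : EltT X} (h : rhoN X p q) : rhoN X q p :=
  fun r hr hN => hr.2.1 _ _ (h r hr hN)

lemma rho_trans {p q w : EltT X} (h1 : rhoN X p q) (h2 : rhoN X q w) : rhoN X p w :=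
  fun r hr hN => hr.2.2.1 _ _ _ (h1 r hr hN) (h2 r hr hN)

lemma trans_one (G : PreGraph (FreeMonoid X) (LabelT X)) :
    PreGraph.trans (1 : FreeMonoid X) G = G := by
  apply PreGraph.ext' <;>
    · simp only [PreGraph.trans, one_mul]
      ext a
      simp

lemma lhs_simp (A : PreGraph (FreeMonoid X) (LabelT X)) (p : EltT X) (v s : FreeMonoid X) :
    gmul (gplus (gmul (A, v) p)) (A, s) = (A.union (PreGraph.trans v p.1), s) := by
  simp only [gmul, gplus, trans_one, one_mul]
  congr 1
  apply PreGraph.ext' <;>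
    · ext a
      simp only [PreGraph.union, Set.mem_union]
      tauto

lemma rho_glue {A : PreGraph (FreeMonoid X) (LabelT X)} {s v : FreeMonoid X}
    (hA : (A, s) ∈ MSem (iotaL X)) (hv : v ∈ A.verts)
    {p q : EltT X} (hp : p ∈ MSem (iotaL X)) (hq : q ∈ MSem (iotaL X)) (hpq : rhoN X p q) :
    rhoN X (A.union (PreGraph.trans v p.1), s) (A.union (PreGraph.trans v q.1), s) := by
  intro r hr hN
  have hAv := mem_of_vert hA hv
  have h1 : r (gmul (A, v) p) (gmul (A, v) q) :=
    hr.2.2.2.1 _ _ _ _ hAv hAv hp hq (hr.1 _ hAv) (hpq r hr hN)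
  have h2 : r (gplus (gmul (A, v) p)) (gplus (gmul (A, v) q)) :=
    hr.2.2.2.2 _ _ (gmul_mem hAv hp) (gmul_mem hAv hq) h1
  have h3 := hr.2.2.2.1 _ _ _ _ (gplus_mem (gmul_mem hAv hp)) (gplus_mem (gmul_mem hAv hq))
    hA hA h2 (hr.1 _ hA)
  rw [lhs_simp, lhs_simp] at h3
  exact h3

lemma step_t1 {A : PreGraph (FreeMonoid X) (LabelT X)} {s v : FreeMonoid X}
    {u : FreeMonoid X} (hA : (A, s) ∈ MSem (iotaL X)) (he : (v, (Sum.inr u : LabelT X)) ∈ A.edges) :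
    rhoN X (A, s) (insertE A (v, Sum.inr 1), s) := by
  obtain ⟨hv, hvu⟩ := hA.1.1.2.2.1 _ he
  simp only [iotaL_inr] at hvu
  by_cases hu : u = 1
  · subst hu
    have : insertE A ((v, Sum.inr 1) : FreeMonoid X × LabelT X) = A := by
      apply PreGraph.ext'
      · rfl
      · exact Set.insert_eq_self.mpr he
    rw [this]
    exact rho_refl hA
  · have hpq : rhoN X (barElt u) (gmul (barElt (1 : FreeMonoid X)) (barElt u)) :=
      fun r _ hN => hN _ _ (Or.inl ⟨u, hu, rfl, rfl⟩)
    have h := rho_glue hA hv (barElt_mem u) (gmul_mem (barElt_mem 1) (barElt_mem u)) hpq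
    have eq1 : A.union (PreGraph.trans v (barElt u).1) = A := by
      apply PreGraph.ext'
      · ext a
        simp only [PreGraph.union, PreGraph.trans, barElt, Set.mem_union, Set.mem_image,
          Set.mem_insert_iff, Set.mem_singleton_iff]
        constructor
        · rintro (h | ⟨b, (rfl | rfl), rfl⟩)
          · exact h
          · simpa using hv
          · exact hvu
        · exact Or.inl
      · ext a
        simp only [PreGraph.union, PreGraph.trans, barElt, Set.mem_union, Set.mem_image,
          Set.mem_singleton_iff]
        constructor
        · rintro (h | ⟨b, rfl, rfl⟩)
          · exact h
          · simpa using he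
        · exact Or.inl
    have eq2 : A.union (PreGraph.trans v (gmul (barElt (1 : FreeMonoid X)) (barElt u)).1) =
        insertE A (v, Sum.inr 1) := by
      apply PreGraph.ext'
      · ext a
        simp only [PreGraph.union, PreGraph.trans, barElt, gmul, insertE, Set.mem_union,
          Set.mem_image, Set.mem_insert_iff, Set.mem_singleton_iff]
        constructor
        · rintro (h | ⟨b, ((rfl | rfl) | ⟨c, (rfl | rfl), rfl⟩), rfl⟩)
          · exact h
          · simpa using hv
          · simpa using hv
          · simpa using hv
          · simpa using hvu
        · exact Or.inl
      · ext a
        simp only [PreGraph.union, PreGraph.trans, barElt, gmul, insertE, Set.mem_union,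
          Set.mem_image, Set.mem_insert_iff, Set.mem_singleton_iff]
        constructor
        · rintro (h | ⟨b, (rfl | ⟨c, rfl, rfl⟩), rfl⟩)
          · exact Or.inr h
          · exact Or.inl (by simp)
          · exact Or.inr (by simpa using he)
        · rintro (rfl | h)
          · exact Or.inr ⟨((1 : FreeMonoid X), (Sum.inr 1 : LabelT X)), Or.inl rfl, by simp⟩
          · exact Or.inl h
    rw [eq1, eq2] at h
    exact h

lemma step_t2 {A : PreGraph (FreeMonoid X) (LabelT X)} {s v : FreeMonoid X}
    {x : X} (hA : (A, s) ∈ MSem (iotaL X)) (he : (v, (Sum.inl x : LabelT X)) ∈ A.edges) :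
    rhoN X (A, s) (insertE A (v, Sum.inr (FreeMonoid.of x)), s) := by
  obtain ⟨hv, hvx⟩ := hA.1.1.2.2.1 _ he
  simp only [iotaL_inl] at hvx
  have hpq : rhoN X (xElt x) (gmul (gplus (xElt x)) (barElt (FreeMonoid.of x))) :=
    fun r _ hN => hN _ _ (Or.inr (Or.inl ⟨x, rfl, rfl⟩))
  have h := rho_glue hA hv (xElt_mem x)
    (gmul_mem (gplus_mem (xElt_mem x)) (barElt_mem _)) hpq
  have eq1 : A.union (PreGraph.trans v (xElt x).1) = A := by
    apply PreGraph.ext'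
    · ext a
      simp only [PreGraph.union, PreGraph.trans, xElt, Set.mem_union, Set.mem_image,
        Set.mem_insert_iff, Set.mem_singleton_iff]
      constructor
      · rintro (h | ⟨b, (rfl | rfl), rfl⟩)
        · exact h
        · simpa using hv
        · exact hvx
      · exact Or.inl
    · ext a
      simp only [PreGraph.union, PreGraph.trans, xElt, Set.mem_union, Set.mem_image,
        Set.mem_singleton_iff]
      constructor
      · rintro (h | ⟨b, rfl, rfl⟩)
        · exact h
        · simpa using he
      · exact Or.inl
  have eq2 : A.union (PreGraph.trans v (gmul (gplus (xElt x)) (barElt (FreeMonoid.of x))).1) =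
      insertE A (v, Sum.inr (FreeMonoid.of x)) := by
    apply PreGraph.ext'
    · ext a
      simp only [PreGraph.union, PreGraph.trans, barElt, xElt, gmul, gplus, insertE,
        Set.mem_union, Set.mem_image, Set.mem_insert_iff, Set.mem_singleton_iff]
      constructor
      · rintro (h | ⟨b, ((rfl | rfl) | ⟨c, (rfl | rfl), rfl⟩), rfl⟩)
        · exact h
        · simpa using hv
        · simpa using hvx
        · simpa using hv
        · simpa using hvx
      · exact Or.inl
    · ext a
      simp only [PreGraph.union, PreGraph.trans, barElt, xElt, gmul, gplus, insertE,
        Set.mem_union, Set.mem_image, Set.mem_singleton_iff, Set.mem_insert_iff]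
      constructor
      · rintro (h | ⟨b, (rfl | ⟨c, rfl, rfl⟩), rfl⟩)
        · exact Or.inr h
        · exact Or.inr (by simpa using he)
        · exact Or.inl (by simp)
      · rintro (rfl | h)
        · exact Or.inr ⟨((1 : FreeMonoid X), (Sum.inr (FreeMonoid.of x) : LabelT X)),
            Or.inr ⟨((1 : FreeMonoid X), (Sum.inr (FreeMonoid.of x) : LabelT X)), rfl, rfl⟩, by simp⟩
        · exact Or.inl h
  rw [eq1, eq2] at h
  exact h

lemma step_t3 {A : PreGraph (FreeMonoid X) (LabelT X)} {s w u v' : FreeMonoid X}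
    (hA : (A, s) ∈ MSem (iotaL X)) (he1 : (w, (Sum.inr u : LabelT X)) ∈ A.edges)
    (he2 : (w * u, (Sum.inr v' : LabelT X)) ∈ A.edges) :
    rhoN X (A, s) (insertE A (w, Sum.inr (u * v')), s) := by
  obtain ⟨hw, hwu⟩ := hA.1.1.2.2.1 _ he1
  obtain ⟨-, hwuv⟩ := hA.1.1.2.2.1 _ he2
  simp only [iotaL_inr] at hwu hwuv
  by_cases hu : u = 1
  · subst hu
    have : insertE A ((w, Sum.inr (1 * v')) : FreeMonoid X × LabelT X) = A := by
      apply PreGraph.ext'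
      · rfl
      · apply Set.insert_eq_self.mpr
        simpa using he2
    rw [this]
    exact rho_refl hA
  by_cases hv' : v' = 1
  · subst hv'
    have : insertE A ((w, Sum.inr (u * 1)) : FreeMonoid X × LabelT X) = A := by
      apply PreGraph.ext'
      · rfl
      · apply Set.insert_eq_self.mpr
        simpa using he1
    rw [this]
    exact rho_refl hA
  · have hpq : rhoN X (gmul (barElt u) (barElt v'))
        (gmul (gplus (gmul (barElt u) (barElt v'))) (barElt (u * v'))) :=
      fun r _ hN => hN _ _ (Or.inr (Or.inr ⟨u, v', hu, hv', rfl, rfl⟩))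
    have h := rho_glue hA hw (gmul_mem (barElt_mem u) (barElt_mem v'))
      (gmul_mem (gplus_mem (gmul_mem (barElt_mem u) (barElt_mem v'))) (barElt_mem _)) hpq
    have eq1 : A.union (PreGraph.trans w (gmul (barElt u) (barElt v')).1) = A := by
      apply PreGraph.ext'
      · ext a
        simp only [PreGraph.union, PreGraph.trans, barElt, gmul, Set.mem_union,
          Set.mem_image, Set.mem_insert_iff, Set.mem_singleton_iff]
        constructor
        · rintro (h | ⟨b, ((rfl | rfl) | ⟨c, (rfl | rfl), rfl⟩), rfl⟩)
          · exact h
          · simpa using hw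
          · exact hwu
          · simpa using hwu
          · simpa [mul_assoc] using hwuv
        · exact Or.inl
      · ext a
        simp only [PreGraph.union, PreGraph.trans, barElt, gmul, Set.mem_union,
          Set.mem_image, Set.mem_singleton_iff]
        constructor
        · rintro (h | ⟨b, (rfl | ⟨c, rfl, rfl⟩), rfl⟩)
          · exact h
          · simpa using he1
          · simpa using he2
        · exact Or.inl
    have eq2 : A.union (PreGraph.trans w
        (gmul (gplus (gmul (barElt u) (barElt v'))) (barElt (u * v'))).1) =
        insertE A (w, Sum.inr (u * v')) := by
      apply PreGraph.ext'
      · ext a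
        simp only [PreGraph.union, PreGraph.trans, barElt, gmul, gplus, insertE,
          Set.mem_union, Set.mem_image, Set.mem_insert_iff, Set.mem_singleton_iff]
        constructor
        · rintro (h | ⟨b, (((rfl | rfl) | ⟨c, (rfl | rfl), rfl⟩) | ⟨c, (rfl | rfl), rfl⟩), rfl⟩)
          · exact h
          · simpa using hw
          · exact hwu
          · simpa using hwu
          · simpa [mul_assoc] using hwuv
          · simpa using hw
          · simpa [mul_assoc] using hwuv
        · exact Or.inl
      · ext a
        simp only [PreGraph.union, PreGraph.trans, barElt, gmul, gplus, insertE,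
          Set.mem_union, Set.mem_image, Set.mem_singleton_iff, Set.mem_insert_iff]
        constructor
        · rintro (h | ⟨b, ((rfl | ⟨c, rfl, rfl⟩) | ⟨c, rfl, rfl⟩), rfl⟩)
          · exact Or.inr h
          · exact Or.inr (by simpa using he1)
          · exact Or.inr (by simpa using he2)
          · exact Or.inl (by simp)
        · rintro (rfl | h)
          · refine Or.inr ⟨((1 : FreeMonoid X), (Sum.inr (u * v') : LabelT X)), ?_, by simp⟩
            exact Or.inr ⟨((1 : FreeMonoid X), (Sum.inr (u * v') : LabelT X)), rfl, rfl⟩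
          · exact Or.inl h
    rw [eq1, eq2] at h
    exact h

end Rho
section Main
variable {X : Type*}

lemma Der.endpoints {E : Set (FreeMonoid X × LabelT X)} {V : Set (FreeMonoid X)}
    (hend : ∀ e ∈ E, e.1 ∈ V ∧ e.1 * iotaL X e.2 ∈ V) {e} (h : Der E e) :
    e.1 ∈ V ∧ e.1 * iotaL X e.2 ∈ V := by
  induction h with
  | base h => exact hend _ h
  | t1 _ ih => exact ⟨ih.1, by simpa using ih.1⟩
  | t2 _ ih => exact ⟨ih.1, by simpa using ih.2⟩
  | t3 _ _ ih1 ih2 => exact ⟨ih1.1, by simpa [mul_assoc] using ih2.2⟩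

lemma edges_nonempty {A : PreGraph (FreeMonoid X) (LabelT X)} {s : FreeMonoid X}
    (hA : (A, s) ∈ MSem (iotaL X)) : A.edges.Nonempty := by
  by_contra h
  rw [Set.not_nonempty_iff_eq_empty] at h
  obtain ⟨⟨⟨hVf, hEf, hend, hone, hreach⟩, hs⟩, hne⟩ := hA
  have hverts : A.verts = {1} := by
    apply subset_antisymm
    · intro v hv
      have := hreach v hv
      induction this with
      | refl => rfl
      | tail _ hstep ih =>
        obtain ⟨x, hx, _⟩ := hstep
        rw [h] at hx
        exact hx.elim
    · intro v hv
      simp only [Set.mem_singleton_iff] at hv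
      subst hv
      exact hone
  apply hne
  have hAl : A = lambdaGraph (FreeMonoid X) (LabelT X) := PreGraph.ext' hverts h
  have : s = 1 := by
    rw [hverts] at hs
    exact hs
  simp only [Set.mem_singleton_iff]
  exact Prod.ext hAl this

/-- Adding a finite set of edges with endpoints among the vertices keeps us in `M`. -/
lemma unionF_mem {A : PreGraph (FreeMonoid X) (LabelT X)} {s : FreeMonoid X}
    {F : Set (FreeMonoid X × LabelT X)} (hA : (A, s) ∈ MSem (iotaL X)) (hF : F.Finite)
    (hFe : ∀ e ∈ F, e.1 ∈ A.verts ∧ e.1 * iotaL X e.2 ∈ A.verts) :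
    ((⟨A.verts, A.edges ∪ F⟩ : PreGraph (FreeMonoid X) (LabelT X)), s) ∈ MSem (iotaL X) := by
  obtain ⟨⟨⟨hVf, hEf, hend, hone, hreach⟩, hs⟩, hne⟩ := hA
  constructor
  · refine ⟨⟨hVf, hEf.union hF, ?_, hone, ?_⟩, hs⟩
    · rintro e (he | he)
      · exact hend e he
      · exact hFe e he
    · intro v hv
      exact Relation.ReflTransGen.mono (fun a b => step_mono Set.subset_union_left) _ _ (hreach v hv)
  · intro h
    simp only [Set.mem_singleton_iff] at h
    have := congrArg (fun z : EltT X => z.1.edges) h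
    simp only [lambdaGraph] at this
    obtain ⟨e, he⟩ := edges_nonempty ⟨⟨⟨hVf, hEf, hend, hone, hreach⟩, hs⟩, hne⟩
    have : e ∈ (∅ : Set (FreeMonoid X × LabelT X)) := this ▸ Or.inl he
    exact this.elim

/-- The main step: any derivable edge can be added modulo `ρ`. -/
lemma rho_insert {E0 : Set (FreeMonoid X × LabelT X)} {e : FreeMonoid X × LabelT X}
    (hd : Der E0 e) :
    ∀ (A : PreGraph (FreeMonoid X) (LabelT X)) (s : FreeMonoid X),
      (A, s) ∈ MSem (iotaL X) → E0 ⊆ A.edges → rhoN X (A, s) (insertE A e, s) := by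
  induction hd with
  | base h =>
    intro A s hA hE
    have heq : insertE A _ = A := PreGraph.ext' rfl (Set.insert_eq_self.mpr (hE h))
    rw [heq]
    exact rho_refl hA
  | @t1 v u h ih =>
    intro A s hA hE
    have hend : (v, (Sum.inr u : LabelT X)).1 ∈ A.verts ∧
        (v, (Sum.inr u : LabelT X)).1 * iotaL X (v, (Sum.inr u : LabelT X)).2 ∈ A.verts :=
      Der.endpoints hA.1.1.2.2.1 (h.mono hE)
    have hA1 : (insertE A (v, Sum.inr u), s) ∈ MSem (iotaL X) :=
      insertE_mem hA hend.1 hend.2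
    have h2 := step_t1 (u := u) hA1 (Set.mem_insert _ _)
    have hAe : (insertE A (v, Sum.inr 1), s) ∈ MSem (iotaL X) :=
      insertE_mem hA hend.1 (by simpa using hend.1)
    have h3 := ih (insertE A (v, Sum.inr 1)) s hAe
      (hE.trans (Set.subset_insert _ _))
    have heq : insertE (insertE A (v, Sum.inr u)) (v, Sum.inr 1) =
        insertE (insertE A (v, Sum.inr 1)) (v, Sum.inr u) :=
      PreGraph.ext' rfl (Set.insert_comm _ _ _)
    refine rho_trans (rho_trans (ih A s hA hE) h2) ?_
    rw [heq]
    exact rho_symm h3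
  | @t2 v x h ih =>
    intro A s hA hE
    have hend : (v, (Sum.inl x : LabelT X)).1 ∈ A.verts ∧
        (v, (Sum.inl x : LabelT X)).1 * iotaL X (v, (Sum.inl x : LabelT X)).2 ∈ A.verts :=
      Der.endpoints hA.1.1.2.2.1 (h.mono hE)
    have hA1 : (insertE A (v, Sum.inl x), s) ∈ MSem (iotaL X) :=
      insertE_mem hA hend.1 hend.2
    have h2 := step_t2 hA1 (Set.mem_insert _ _)
    have hAe : (insertE A (v, Sum.inr (FreeMonoid.of x)), s) ∈ MSem (iotaL X) :=
      insertE_mem hA hend.1 (by simpa using hend.2)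
    have h3 := ih (insertE A (v, Sum.inr (FreeMonoid.of x))) s hAe
      (hE.trans (Set.subset_insert _ _))
    have heq : insertE (insertE A (v, Sum.inl x)) (v, Sum.inr (FreeMonoid.of x)) =
        insertE (insertE A (v, Sum.inr (FreeMonoid.of x))) (v, Sum.inl x) :=
      PreGraph.ext' rfl (Set.insert_comm _ _ _)
    refine rho_trans (rho_trans (ih A s hA hE) h2) ?_
    rw [heq]
    exact rho_symm h3
  | @t3 w u v' h1 h2 ih1 ih2 =>
    intro A s hA hE
    have hend1 : (w, (Sum.inr u : LabelT X)).1 ∈ A.verts ∧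
        (w, (Sum.inr u : LabelT X)).1 * iotaL X (w, (Sum.inr u : LabelT X)).2 ∈ A.verts :=
      Der.endpoints hA.1.1.2.2.1 (h1.mono hE)
    have hend2 : (w * u, (Sum.inr v' : LabelT X)).1 ∈ A.verts ∧
        (w * u, (Sum.inr v' : LabelT X)).1 * iotaL X (w * u, (Sum.inr v' : LabelT X)).2 ∈ A.verts :=
      Der.endpoints hA.1.1.2.2.1 (h2.mono hE)
    -- forward chain
    have hA1 : (insertE A (w, Sum.inr u), s) ∈ MSem (iotaL X) :=
      insertE_mem hA hend1.1 hend1.2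
    have g1 := ih1 A s hA hE
    have hA2 : (insertE (insertE A (w, Sum.inr u)) (w * u, Sum.inr v'), s) ∈ MSem (iotaL X) :=
      insertE_mem hA1 hend2.1 hend2.2
    have g2 := ih2 (insertE A (w, Sum.inr u)) s hA1 (hE.trans (Set.subset_insert _ _))
    have g3 := step_t3 hA2 (u := u) (v' := v')
      (Set.mem_insert_of_mem _ (Set.mem_insert _ _)) (Set.mem_insert _ _)
    -- backward chain
    have hAe : (insertE A (w, Sum.inr (u * v')), s) ∈ MSem (iotaL X) :=
      insertE_mem hA hend1.1 (by simpa [mul_assoc] using hend2.2)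
    have g4 := ih1 (insertE A (w, Sum.inr (u * v'))) s hAe (hE.trans (Set.subset_insert _ _))
    have hAe1 : (insertE (insertE A (w, Sum.inr (u * v'))) (w, Sum.inr u), s) ∈ MSem (iotaL X) :=
      insertE_mem hAe hend1.1 hend1.2
    have g5 := ih2 (insertE (insertE A (w, Sum.inr (u * v'))) (w, Sum.inr u)) s hAe1
      (hE.trans ((Set.subset_insert _ _).trans (Set.subset_insert _ _)))
    have heq : insertE (insertE (insertE A (w, Sum.inr u)) (w * u, Sum.inr v'))
          (w, Sum.inr (u * v')) =
        insertE (insertE (insertE A (w, Sum.inr (u * v'))) (w, Sum.inr u)) (w * u, Sum.inr v') := by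
      refine PreGraph.ext' rfl ?_
      ext a
      simp only [insertE, Set.mem_insert_iff]
      tauto
    refine rho_trans (rho_trans (rho_trans g1 g2) g3) ?_
    rw [heq]
    exact rho_symm (rho_trans g4 g5)

end Main
section Finiteness
variable {X : Type*}

lemma Der.inl_mem {E : Set (FreeMonoid X × LabelT X)} {v : FreeMonoid X} {x : X}
    (h : Der E (v, Sum.inl x)) : (v, (Sum.inl x : LabelT X)) ∈ E := by
  cases h with
  | base h => exact h

open Classical in
lemma der_finite {A : PreGraph (FreeMonoid X) (LabelT X)}
    (hacc : IsAccessible (iotaL X) A) : {e | Der A.edges e}.Finite := by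
  obtain ⟨hVf, hEf, hend, hone, hreach⟩ := hacc
  classical
  set g : FreeMonoid X × FreeMonoid X → FreeMonoid X × LabelT X :=
    fun p => (p.1, Sum.inr (if h : ∃ u, p.2 = p.1 * u then h.choose else 1)) with hg
  apply Set.Finite.subset (hEf.union (((hVf.prod hVf).image g)))
  rintro ⟨v, y⟩ hder
  simp only [Set.mem_setOf_eq] at hder
  match y with
  | Sum.inl x => exact Or.inl hder.inl_mem
  | Sum.inr u =>
    obtain ⟨h1, h2⟩ := Der.endpoints hend hder
    simp only [iotaL_inr] at h2
    refine Or.inr ⟨(v, v * u), ⟨h1, h2⟩, ?_⟩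
    have hex : ∃ w, v * u = v * w := ⟨u, rfl⟩
    simp only [hg, dif_pos hex]
    have : hex.choose = u := (mul_left_cancel hex.choose_spec.symm)
    rw [this]

lemma rho_clos {A : PreGraph (FreeMonoid X) (LabelT X)} {s : FreeMonoid X}
    (hA : (A, s) ∈ MSem (iotaL X)) : rhoN X (A, s) (closG A, s) := by
  have key : ∀ F : Set (FreeMonoid X × LabelT X), F.Finite →
      F ⊆ {e | Der A.edges e} →
      rhoN X (A, s) ((⟨A.verts, A.edges ∪ F⟩ : PreGraph (FreeMonoid X) (LabelT X)), s) := by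
    intro F hF
    refine Set.Finite.induction_on
      (motive := fun F _ => F ⊆ {e | Der A.edges e} →
        rhoN X (A, s) ((⟨A.verts, A.edges ∪ F⟩ : PreGraph (FreeMonoid X) (LabelT X)), s))
      F hF ?_ ?_
    · intro _
      have h0 : (⟨A.verts, A.edges ∪ ∅⟩ : PreGraph (FreeMonoid X) (LabelT X)) = A :=
        PreGraph.ext' rfl (Set.union_empty _)
      rw [h0]
      exact rho_refl hA
    · intro e F henF hFfin ih hsub
      have hF : F ⊆ {e | Der A.edges e} := (Set.subset_insert _ _).trans hsub
      have hde : Der A.edges e := hsub (Set.mem_insert _ _)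
      have hAF : ((⟨A.verts, A.edges ∪ F⟩ : PreGraph (FreeMonoid X) (LabelT X)), s) ∈
          MSem (iotaL X) :=
        unionF_mem hA hFfin (fun e' he' => Der.endpoints hA.1.1.2.2.1 (hF he'))
      have h2 := rho_insert hde (⟨A.verts, A.edges ∪ F⟩ : PreGraph (FreeMonoid X) (LabelT X))
        s hAF Set.subset_union_left
      have heq : insertE (⟨A.verts, A.edges ∪ F⟩ : PreGraph (FreeMonoid X) (LabelT X)) e =
          (⟨A.verts, A.edges ∪ insert e F⟩ : PreGraph (FreeMonoid X) (LabelT X)) :=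
        PreGraph.ext' rfl (Set.union_insert).symm
      rw [heq] at h2
      exact rho_trans (ih hF) h2
  have hfin := der_finite (X := X) hA.1.1
  have h := key _ hfin (fun e he => he)
  have heq : (⟨A.verts, A.edges ∪ {e | Der A.edges e}⟩ :
      PreGraph (FreeMonoid X) (LabelT X)) = closG A := by
    rw [closG_eq]
    refine PreGraph.ext' rfl ?_
    apply Set.union_eq_self_of_subset_left
    exact fun e he => Der.base he
  rw [heq] at h
  exact h

end Finiteness
/-- for the least `(·,⁺)`-congruence `ρ` on `M(X*, X ∪ X̄*)`
containing `N = N₁ ∪ N₂ ∪ N₃`: `(A,s) ρ (B,t)` iff `s = t` and `A^∧ = B^∧`. -/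
theorem stmt_15 (X : Type*) (A B : PreGraph (FreeMonoid X) (LabelT X))
    (s t : FreeMonoid X)
    (hA : (A, s) ∈ MSem (iotaL X)) (hB : (B, t) ∈ MSem (iotaL X)) :
    rhoN X (A, s) (B, t) ↔ (s = t ∧ closG A = closG B) := by
  constructor
  · intro h
    exact h rEq rEq_cong rEq_of_NRel
  · rintro ⟨rfl, hcl⟩
    have h1 := rho_clos hA
    have h2 := rho_clos hB
    rw [hcl] at h1
    exact rho_trans h1 (rho_symm h2)
end

section
/- Let Γ be a finite accessible ρ_s-closed subgraph of Cay(X*, X ∪ X̄*) with at least one edge, and let u and uv be distinct vertices of Γ (v ∈ X*, v ≠ λ). Then Γ contains the edge (u, v̄, uv). -/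
/-- An edge set `D` is `ρ_s`-closed, i.e. closed under the transformations
(T1)–(T4):
(T1) an edge `(v, ū, vu)` forces the loop `(v, λ̄, v)`;
(T2) an edge `(v, x, vx)` forces the edge `(v, x̄, vx)`;
(T3) edges `(w, ū, wu)` and `(wu, v̄, wuv)` force the edge `(w, uv‾, wuv)`;
(T4) edges `(w, ū, wu)` and `(w, uv‾, wuv)` force the edge `(wu, v̄, wuv)`. -/
def ClosedES {X : Type*} (D : Set (FreeMonoid X × LabelT X)) : Prop :=
  (∀ (v : FreeMonoid X) (u : FreeMonoid X),
    (v, (Sum.inr u : LabelT X)) ∈ D → (v, (Sum.inr 1 : LabelT X)) ∈ D) ∧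
  (∀ (v : FreeMonoid X) (x : X),
    (v, (Sum.inl x : LabelT X)) ∈ D → (v, (Sum.inr (FreeMonoid.of x) : LabelT X)) ∈ D) ∧
  (∀ (w u v' : FreeMonoid X),
    (w, (Sum.inr u : LabelT X)) ∈ D → (w * u, (Sum.inr v' : LabelT X)) ∈ D →
      (w, (Sum.inr (u * v') : LabelT X)) ∈ D) ∧
  (∀ (w u v' : FreeMonoid X),
    (w, (Sum.inr u : LabelT X)) ∈ D → (w, (Sum.inr (u * v') : LabelT X)) ∈ D →
      (w * u, (Sum.inr v' : LabelT X)) ∈ D)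

/-!
Every vertex `w` of `Γ` is reachable from `λ`, and (T2)/(T3) let us compose the
edges of such a path one at a time into a single edge `(λ, w̄, w)`, starting from the
loop `(λ, λ̄, λ)` that (T1) produces from any edge leaving `λ`. For the vertices `u`
and `uv` this gives `(λ, ū, u)` and `(λ, uv‾, uv)`, and (T4) splits off `(u, v̄, uv)`.
-/

namespace ClosedES

variable {X : Type*} {D : Set (FreeMonoid X × LabelT X)}

theorem empty_loop_mem (hD : ClosedES D) {a : FreeMonoid X} :
    ∀ {y : LabelT X}, (a, y) ∈ D → (a, (Sum.inr 1 : LabelT X)) ∈ D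
  | Sum.inl x, h => hD.1 a _ (hD.2.1 a x h)
  | Sum.inr w, h => hD.1 a w h

theorem comp_mem (hD : ClosedES D) {w : FreeMonoid X} {y : LabelT X}
    (hw : ((1 : FreeMonoid X), (Sum.inr w : LabelT X)) ∈ D) (hy : (w, y) ∈ D) :
    ((1 : FreeMonoid X), (Sum.inr (w * iotaL X y) : LabelT X)) ∈ D := by
  have hw' := hD.2.2.1 1 w (iotaL X y) hw
  rw [one_mul] at hw'
  cases y with
  | inl x => exact hw' (hD.2.1 w x hy)
  | inr v => exact hw' hy

end ClosedES

section Accessible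

variable {X : Type*} {Γ : PreGraph (FreeMonoid X) (LabelT X)}

theorem IsAccessible.reachable_s17 (hacc : IsAccessible (iotaL X) Γ) {w : FreeMonoid X}
    (hw : w ∈ Γ.verts) : Relation.ReflTransGen (PreGraph.step (iotaL X) Γ) 1 w :=
  hacc.2.2.2.2 w hw

theorem ClosedES.mem_of_reflTransGen (hΓ : ClosedES Γ.edges)
    (hloop : ((1 : FreeMonoid X), (Sum.inr 1 : LabelT X)) ∈ Γ.edges) {w : FreeMonoid X}
    (hw : Relation.ReflTransGen (PreGraph.step (iotaL X) Γ) 1 w) :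
    ((1 : FreeMonoid X), (Sum.inr w : LabelT X)) ∈ Γ.edges := by
  induction hw with
  | refl => exact hloop
  | tail _ hstep ih =>
    obtain ⟨y, hy, rfl⟩ := hstep
    exact hΓ.comp_mem ih hy

theorem IsAccessible.empty_loop_one_mem (hacc : IsAccessible (iotaL X) Γ)
    (hΓ : ClosedES Γ.edges) (hedge : Γ.edges.Nonempty) :
    ((1 : FreeMonoid X), (Sum.inr 1 : LabelT X)) ∈ Γ.edges := by
  obtain ⟨⟨s, y⟩, hsy⟩ := hedge
  rcases (hacc.reachable_s17 (hacc.2.2.1 _ hsy).1).cases_head with rfl | ⟨_, ⟨x, hx, -⟩, -⟩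
  · exact hΓ.empty_loop_mem hsy
  · exact hΓ.empty_loop_mem hx

end Accessible

theorem stmt_17_general (X : Type*) (Γ : PreGraph (FreeMonoid X) (LabelT X))
    (hacc : IsAccessible (iotaL X) Γ)
    (hclosed : ClosedES Γ.edges)
    (hedge : Γ.edges.Nonempty)
    (u v : FreeMonoid X) (hu : u ∈ Γ.verts) (huv : u * v ∈ Γ.verts) :
    (u, (Sum.inr v : LabelT X)) ∈ Γ.edges := by
  have hloop := hacc.empty_loop_one_mem hclosed hedge
  have hu' := hclosed.mem_of_reflTransGen hloop (hacc.reachable_s17 hu)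
  have huv' := hclosed.mem_of_reflTransGen hloop (hacc.reachable_s17 huv)
  simpa only [one_mul] using hclosed.2.2.2 1 u v hu' huv'

/-- if `Γ` is a finite accessible `ρ_s`-closed subgraph of
`Cay(X*, X ∪ X̄*)` with at least one edge and `u`, `uv` are distinct vertices of
`Γ` (with `v ∈ X*`, `v ≠ λ`), then `Γ` contains the edge `(u, v̄, uv)`. -/
theorem stmt_17 (X : Type*) (Γ : PreGraph (FreeMonoid X) (LabelT X))
    (hacc : IsAccessible (iotaL X) Γ)
    (hclosed : ClosedES Γ.edges)
    (hedge : Γ.edges.Nonempty)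
    (u v : FreeMonoid X) (hu : u ∈ Γ.verts) (huv : u * v ∈ Γ.verts)
    (hv : v ≠ 1) :
    (u, (Sum.inr v : LabelT X)) ∈ Γ.edges :=
  stmt_17_general X Γ hacc hclosed hedge u v hu huv
end

section
/- Let ρ_p be the least (·,⁺)-congruence on M^λ(X*, X ∪ X̄) containing N_p = {(x, x⁺·x̄) : x ∈ X} ∪ {(1, x̄⁺) : x ∈ X}, where 1 = (Γ_λ, λ) is the identity element. Then for all (A,s), (B,t) ∈ M^λ(X*, X ∪ X̄): (A,s) ρ_p (B,t) if and only if s = t and the sets of edges of A and of B labeled by letters of X coincide, i.e. {(u, x) : x ∈ X, (u, x, ux) ∈ E(A)} = {(u, x) : x ∈ X, (u, x, ux) ∈ E(B)}. -/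
/-- The label alphabet `X ∪ X̄`, where `Sum.inl x` is the letter `x ∈ X` and
`Sum.inr x` is the extra generator `x̄`. -/
abbrev Label2 (X : Type*) := X ⊕ X

/-- The generating map `X ∪ X̄ → X*`: `x ↦ x`, `x̄ ↦ x`. -/
def iota2 (X : Type*) : Label2 X → FreeMonoid X :=
  Sum.elim FreeMonoid.of FreeMonoid.of

/-- Elements of the Gould expansion of `X*` over `X ∪ X̄`. -/
abbrev Elt2 (X : Type*) := PreGraph (FreeMonoid X) (Label2 X) × FreeMonoid X

/-- The element `x = (Γ_x, x)` of the Gould expansion, for `x ∈ X`. -/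
def xElt2 {X : Type*} (x : X) : Elt2 X :=
  (⟨{1, FreeMonoid.of x}, {((1 : FreeMonoid X), (Sum.inl x : Label2 X))}⟩,
    FreeMonoid.of x)

/-- The element `x̄ = (Γ_x̄, x)` of the Gould expansion, for `x ∈ X`. -/
def xbarElt {X : Type*} (x : X) : Elt2 X :=
  (⟨{1, FreeMonoid.of x}, {((1 : FreeMonoid X), (Sum.inr x : Label2 X))}⟩,
    FreeMonoid.of x)

/-- The set of relations `N_p = {(x, x⁺·x̄) : x ∈ X} ∪ {(1, x̄⁺) : x ∈ X}`,
where `1 = (Γ_λ, λ)` is the identity element. -/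
def NpRel {X : Type*} (p q : Elt2 X) : Prop :=
  (∃ x : X, p = xElt2 x ∧ q = gmul (gplus (xElt2 x)) (xbarElt x)) ∨
  (∃ x : X, p = ((lambdaGraph (FreeMonoid X) (Label2 X)), (1 : FreeMonoid X)) ∧
    q = gplus (xbarElt x))

/-- The congruence `ρ_p` on `M^λ(X*, X ∪ X̄)`. -/
def rhoP (X : Type*) (p q : Elt2 X) : Prop :=
  CongGen (Mlam (iota2 X)) NpRel p q

namespace Stmt18Aux

variable {X : Type*}

lemma pg_ext {S Y : Type*} {A B : PreGraph S Y} (hv : A.verts = B.verts)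
    (he : A.edges = B.edges) : A = B := by
  cases A; cases B; simp_all

/-- The set of `X`-labeled edges of a graph. -/
def inlE (G : PreGraph (FreeMonoid X) (Label2 X)) : Set (FreeMonoid X × X) :=
  {e | (e.1, (Sum.inl e.2 : Label2 X)) ∈ G.edges}

lemma rho_refl {p : Elt2 X} (hp : p ∈ Mlam (iota2 X)) : rhoP X p p :=
  fun r hr _ => hr.1 p hp

lemma rho_symm {p q : Elt2 X} (h : rhoP X p q) : rhoP X q p :=
  fun r hr hN => hr.2.1 _ _ (h r hr hN)

lemma rho_trans {p q u : Elt2 X} (h1 : rhoP X p q) (h2 : rhoP X q u) : rhoP X p u :=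
  fun r hr hN => hr.2.2.1 _ _ _ (h1 r hr hN) (h2 r hr hN)

lemma rho_mul {p q p' q' : Elt2 X} (hp : p ∈ Mlam (iota2 X)) (hq : q ∈ Mlam (iota2 X))
    (hp' : p' ∈ Mlam (iota2 X)) (hq' : q' ∈ Mlam (iota2 X))
    (h1 : rhoP X p q) (h2 : rhoP X p' q') : rhoP X (gmul p p') (gmul q q') :=
  fun r hr hN => hr.2.2.2.1 _ _ _ _ hp hq hp' hq' (h1 r hr hN) (h2 r hr hN)

lemma rho_plus {p q : Elt2 X} (hp : p ∈ Mlam (iota2 X)) (hq : q ∈ Mlam (iota2 X))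
    (h : rhoP X p q) : rhoP X (gplus p) (gplus q) :=
  fun r hr hN => hr.2.2.2.2 _ _ hp hq (h r hr hN)

lemma rho_N {p q : Elt2 X} (h : NpRel p q) : rhoP X p q :=
  fun _ _ hN => hN _ _ h

lemma iota2_inr (x : X) : iota2 X (Sum.inr x) = FreeMonoid.of x := rfl
lemma iota2_inl (x : X) : iota2 X (Sum.inl x) = FreeMonoid.of x := rfl

lemma step_mono {G H : PreGraph (FreeMonoid X) (Label2 X)} (h : G.edges ⊆ H.edges)
    {a b : FreeMonoid X} (hs : PreGraph.step (iota2 X) G a b) :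
    PreGraph.step (iota2 X) H a b := by
  obtain ⟨y, hy, hb⟩ := hs; exact ⟨y, h hy, hb⟩

lemma lam_mem : ((lambdaGraph (FreeMonoid X) (Label2 X)), (1 : FreeMonoid X)) ∈
    Mlam (iota2 X) := by
  refine ⟨⟨Set.finite_singleton _, Set.finite_empty, ?_, rfl, ?_⟩, rfl⟩
  · intro e he; exact absurd he (Set.notMem_empty e)
  · intro v hv
    rcases hv with rfl
    exact Relation.ReflTransGen.refl

lemma xbarplus_mem (x : X) : gplus (xbarElt x) ∈ Mlam (iota2 X) := by
  refine ⟨⟨(Set.finite_singleton _).insert _, Set.finite_singleton _, ?_, ?_, ?_⟩, ?_⟩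
  · rintro e (rfl : e = _)
    exact ⟨Set.mem_insert _ _, by
      simp only [iota2_inr, one_mul]
      exact Set.mem_insert_of_mem _ rfl⟩
  · exact Set.mem_insert _ _
  · intro v hv
    rcases hv with rfl | hv
    · exact Relation.ReflTransGen.refl
    · rcases hv with rfl
      exact Relation.ReflTransGen.single ⟨Sum.inr x, rfl, (one_mul _).symm⟩
  · exact Set.mem_insert _ _

/-- Adding an `x̄`-edge at a vertex `u` preserves the `ρ_p`-class. -/
lemma add_xbar (A : PreGraph (FreeMonoid X) (Label2 X)) (s u : FreeMonoid X) (x : X)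
    (hA : (A, s) ∈ Mlam (iota2 X)) (hu : u ∈ A.verts) :
    rhoP X (A, s)
      (⟨insert (u * FreeMonoid.of x) A.verts, insert (u, Sum.inr x) A.edges⟩, s) ∧
    ((⟨insert (u * FreeMonoid.of x) A.verts,
        insert (u, Sum.inr x) A.edges⟩ : PreGraph (FreeMonoid X) (Label2 X)), s) ∈
      Mlam (iota2 X) := by
  obtain ⟨⟨hvf, hef, hends, h1v, hreach⟩, hs⟩ := hA
  set A' : PreGraph (FreeMonoid X) (Label2 X) :=
    ⟨insert (u * FreeMonoid.of x) A.verts, insert (u, Sum.inr x) A.edges⟩ with hA'def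
  have hsubv : A.verts ⊆ A'.verts := Set.subset_insert _ _
  have hsube : A.edges ⊆ A'.edges := Set.subset_insert _ _
  have hA'mem : (A', s) ∈ Mlam (iota2 X) := by
    refine ⟨⟨hvf.insert _, hef.insert _, ?_, hsubv h1v, ?_⟩, hsubv hs⟩
    · rintro e (rfl | he)
      · exact ⟨hsubv hu, Set.mem_insert _ _⟩
      · exact ⟨hsubv (hends e he).1, hsubv (hends e he).2⟩
    · intro v hv
      rcases hv with rfl | hv
      · exact Relation.ReflTransGen.tail
          (Relation.ReflTransGen.mono (fun a b => step_mono hsube) _ _ (hreach u hu))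
          ⟨Sum.inr x, Set.mem_insert _ _, rfl⟩
      · exact Relation.ReflTransGen.mono (fun a b => step_mono hsube) _ _ (hreach v hv)
  have hAu : (A, u) ∈ Mlam (iota2 X) := ⟨⟨hvf, hef, hends, h1v, hreach⟩, hu⟩
  have hA'u : (A', u) ∈ Mlam (iota2 X) := ⟨hA'mem.1, hsubv hu⟩
  have hA1 : (A, (1 : FreeMonoid X)) ∈ Mlam (iota2 X) := ⟨⟨hvf, hef, hends, h1v, hreach⟩, h1v⟩
  have hA'1 : (A', (1 : FreeMonoid X)) ∈ Mlam (iota2 X) := ⟨hA'mem.1, hsubv h1v⟩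
  have hAs : (A, s) ∈ Mlam (iota2 X) := ⟨⟨hvf, hef, hends, h1v, hreach⟩, hs⟩
  have h0 : rhoP X ((lambdaGraph (FreeMonoid X) (Label2 X)), (1 : FreeMonoid X))
      (gplus (xbarElt x)) := rho_N (Or.inr ⟨x, rfl, rfl⟩)
  have h1 : rhoP X (gmul (A, u) ((lambdaGraph (FreeMonoid X) (Label2 X)), 1))
      (gmul (A, u) (gplus (xbarElt x))) :=
    rho_mul hAu hAu lam_mem (xbarplus_mem x) (rho_refl hAu) h0
  have eq1 : gmul (A, u) ((lambdaGraph (FreeMonoid X) (Label2 X)), (1 : FreeMonoid X))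
      = (A, u) := by
    refine Prod.ext ?_ (mul_one u)
    refine pg_ext ?_ ?_
    · show A.verts ∪ (u * ·) '' {1} = A.verts
      simp [Set.image_singleton, mul_one, Set.union_eq_self_of_subset_right,
        Set.singleton_subset_iff, hu]
    · show A.edges ∪ (fun e : FreeMonoid X × Label2 X => (u * e.1, e.2)) '' (∅ : Set (FreeMonoid X × Label2 X)) = A.edges
      simp
  have eq2 : gmul (A, u) (gplus (xbarElt x)) = (A', u) := by
    refine Prod.ext ?_ (mul_one u)
    refine pg_ext ?_ ?_
    · show A.verts ∪ (u * ·) '' {1, FreeMonoid.of x} = A'.verts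
      ext v
      simp only [hA'def, Set.image_insert_eq, Set.image_singleton, Set.mem_union,
        Set.mem_insert_iff, Set.mem_singleton_iff, mul_one]
      constructor
      · rintro (h | rfl | rfl)
        · exact Or.inr h
        · exact Or.inr hu
        · exact Or.inl rfl
      · rintro (rfl | h)
        · exact Or.inr (Or.inr rfl)
        · exact Or.inl h
    · show A.edges ∪ (fun e => (u * e.1, e.2)) '' {(1, Sum.inr x)} = A'.edges
      ext e
      simp only [hA'def, Set.image_singleton, Set.mem_union, Set.mem_singleton_iff,
        Set.mem_insert_iff, mul_one]
      tauto
  rw [eq1, eq2] at h1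
  have h3 : rhoP X (A, (1 : FreeMonoid X)) (A', (1 : FreeMonoid X)) :=
    rho_plus hAu hA'u h1
  have h4 : rhoP X (gmul (A, (1 : FreeMonoid X)) (A, s))
      (gmul (A', (1 : FreeMonoid X)) (A, s)) :=
    rho_mul hA1 hA'1 hAs hAs h3 (rho_refl hAs)
  have eq3 : gmul (A, (1 : FreeMonoid X)) (A, s) = (A, s) := by
    refine Prod.ext ?_ (one_mul s)
    refine pg_ext ?_ ?_
    · show A.verts ∪ (1 * ·) '' A.verts = A.verts
      simp [one_mul]
    · show A.edges ∪ (fun e => (1 * e.1, e.2)) '' A.edges = A.edges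
      simp [one_mul]
  have eq4 : gmul (A', (1 : FreeMonoid X)) (A, s) = (A', s) := by
    refine Prod.ext ?_ (one_mul s)
    refine pg_ext ?_ ?_
    · show A'.verts ∪ (1 * ·) '' A.verts = A'.verts
      simp only [one_mul]
      rw [Set.image_id']
      exact Set.union_eq_self_of_subset_right hsubv
    · show A'.edges ∪ (fun e => (1 * e.1, e.2)) '' A.edges = A'.edges
      simp only [one_mul]
      rw [show (fun e : FreeMonoid X × Label2 X => (e.1, e.2)) = id from rfl, Set.image_id]
      exact Set.union_eq_self_of_subset_right hsube
  rw [eq3, eq4] at h4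
  exact ⟨h4, hA'mem⟩


/-- If some edge of `B` is missing from `A'`, there is an addable `x̄`-edge. -/
lemma exists_addable (A B A' : PreGraph (FreeMonoid X) (Label2 X)) (s : FreeMonoid X)
    (hB : IsAccessible (iota2 X) B)
    (hinl : ∀ u x, (u, (Sum.inl x : Label2 X)) ∈ B.edges →
      (u, (Sum.inl x : Label2 X)) ∈ A.edges)
    (hA' : (A', s) ∈ Mlam (iota2 X))
    (hAe : A.edges ⊆ A'.edges)
    (hne : ¬ B.edges ⊆ A'.edges) :
    ∃ u x, (u, (Sum.inr x : Label2 X)) ∈ B.edges ∧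
      (u, (Sum.inr x : Label2 X)) ∉ A'.edges ∧ u ∈ A'.verts := by
  obtain ⟨e, heB, heA'⟩ := Set.not_subset.mp hne
  -- the key claim: an unreached vertex forces an addable edge on the way
  have key : ∀ v : FreeMonoid X,
      Relation.ReflTransGen (PreGraph.step (iota2 X) B) 1 v → v ∉ A'.verts →
      ∃ u x, (u, (Sum.inr x : Label2 X)) ∈ B.edges ∧
        (u, (Sum.inr x : Label2 X)) ∉ A'.edges ∧ u ∈ A'.verts := by
    intro v hv
    induction hv with
    | refl => intro h1; exact absurd hA'.1.2.2.2.1 h1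
    | @tail w v hw hstep ih =>
      intro hvA'
      by_cases hwA' : w ∈ A'.verts
      · obtain ⟨y, hyB, rfl⟩ := hstep
        have hyA' : (w, y) ∉ A'.edges := fun hc => hvA' ((hA'.1.2.2.1 _ hc).2)
        cases y with
        | inl x => exact absurd (hAe (hinl w x hyB)) hyA'
        | inr x => exact ⟨w, x, hyB, hyA', hwA'⟩
      · exact ih hwA'
  -- e.1 ∈ B.verts, and its label must be inr
  have he1 : e.1 ∈ B.verts := (hB.2.2.1 e heB).1
  by_cases h1 : e.1 ∈ A'.verts
  · obtain ⟨u, y⟩ := e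
    cases y with
    | inl x => exact absurd (hAe (hinl u x heB)) heA'
    | inr x => exact ⟨u, x, heB, heA', h1⟩
  · exact key e.1 (hB.2.2.2.2 e.1 he1) h1

lemma grow (A B : PreGraph (FreeMonoid X) (Label2 X)) (s : FreeMonoid X)
    (hB : IsAccessible (iota2 X) B)
    (hinl : ∀ u x, (u, (Sum.inl x : Label2 X)) ∈ B.edges →
      (u, (Sum.inl x : Label2 X)) ∈ A.edges) :
    ∀ (n : ℕ) (A' : PreGraph (FreeMonoid X) (Label2 X)),
      (B.edges \ A'.edges).ncard ≤ n →
      (A', s) ∈ Mlam (iota2 X) → rhoP X (A, s) (A', s) →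
      A.verts ⊆ A'.verts → A.edges ⊆ A'.edges →
      A'.verts ⊆ A.verts ∪ B.verts → A'.edges ⊆ A.edges ∪ B.edges →
      ∃ A'' : PreGraph (FreeMonoid X) (Label2 X),
        (A'', s) ∈ Mlam (iota2 X) ∧ rhoP X (A, s) (A'', s) ∧
        A.verts ⊆ A''.verts ∧ A.edges ⊆ A''.edges ∧ B.edges ⊆ A''.edges ∧
        A''.verts ⊆ A.verts ∪ B.verts ∧ A''.edges ⊆ A.edges ∪ B.edges := by
  intro n
  induction n with
  | zero =>
    intro A' hcard hA' hrho hv he hv' he'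
    have : (B.edges \ A'.edges) = ∅ := by
      have hfin : (B.edges \ A'.edges).Finite := hB.2.1.diff
      exact (Set.ncard_eq_zero hfin).mp (Nat.le_zero.mp hcard)
    exact ⟨A', hA', hrho, hv, he, Set.diff_eq_empty.mp this, hv', he'⟩
  | succ n ih =>
    intro A' hcard hA' hrho hv he hv' he'
    by_cases hsub : B.edges ⊆ A'.edges
    · exact ⟨A', hA', hrho, hv, he, hsub, hv', he'⟩
    · obtain ⟨u, x, huB, huA', huv⟩ := exists_addable A B A' s hB hinl hA' he hsub
      obtain ⟨hrho2, hmem2⟩ := add_xbar A' s u x hA' huv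
      set A'' : PreGraph (FreeMonoid X) (Label2 X) :=
        ⟨insert (u * FreeMonoid.of x) A'.verts, insert (u, Sum.inr x) A'.edges⟩
        with hA''def
      have hcard2 : (B.edges \ A''.edges).ncard ≤ n := by
        have hset : B.edges \ A''.edges = (B.edges \ A'.edges) \ {(u, Sum.inr x)} := by
          simp only [hA''def]
          ext f
          simp only [Set.mem_diff, Set.mem_insert_iff, Set.mem_singleton_iff]
          tauto
        have hfin : (B.edges \ A'.edges).Finite := hB.2.1.diff
        have hlt : ((B.edges \ A'.edges) \ {(u, Sum.inr x)}).ncard <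
            (B.edges \ A'.edges).ncard :=
          Set.ncard_diff_singleton_lt_of_mem ⟨huB, huA'⟩ hfin
        rw [hset]
        omega
      have hvsub : A''.verts ⊆ A.verts ∪ B.verts := by
        rintro v (rfl | hvv)
        · exact Or.inr ((hB.2.2.1 _ huB).2)
        · exact hv' hvv
      have hesub : A''.edges ⊆ A.edges ∪ B.edges := by
        rintro f (rfl | hf)
        · exact Or.inr huB
        · exact he' hf
      exact ih A'' hcard2 hmem2 (rho_trans hrho hrho2)
        (hv.trans (Set.subset_insert _ _)) (he.trans (Set.subset_insert _ _))
        hvsub hesub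


lemma rho_union (A B : PreGraph (FreeMonoid X) (Label2 X)) (s : FreeMonoid X)
    (hA : (A, s) ∈ Mlam (iota2 X)) (hB : IsAccessible (iota2 X) B)
    (hinl : ∀ u x, (u, (Sum.inl x : Label2 X)) ∈ B.edges →
      (u, (Sum.inl x : Label2 X)) ∈ A.edges) :
    rhoP X (A, s) (A.union B, s) := by
  obtain ⟨A'', hmem, hrho, hAv, hAe, hBe, hv', he'⟩ :=
    grow A B s hB hinl (B.edges \ A.edges).ncard A le_rfl hA (rho_refl hA)
      subset_rfl subset_rfl Set.subset_union_left Set.subset_union_left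
  have hBv : B.verts ⊆ A''.verts := by
    intro v hv
    have hr := hB.2.2.2.2 v hv
    clear hv
    induction hr with
    | refl => exact hmem.1.2.2.2.1
    | @tail w v _ hstep ih =>
      obtain ⟨y, hyB, rfl⟩ := hstep
      exact (hmem.1.2.2.1 _ (hBe hyB)).2
  have heq : A'' = A.union B := by
    refine pg_ext ?_ ?_
    · exact Set.Subset.antisymm hv' (Set.union_subset hAv hBv)
    · exact Set.Subset.antisymm he' (Set.union_subset hAe hBe)
  rw [← heq]
  exact hrho

lemma inlE_union (G H : PreGraph (FreeMonoid X) (Label2 X)) :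
    inlE (G.union H) = inlE G ∪ inlE H := rfl

lemma inlE_trans (s : FreeMonoid X) (G : PreGraph (FreeMonoid X) (Label2 X)) :
    inlE (PreGraph.trans s G) = (fun e : FreeMonoid X × X => (s * e.1, e.2)) '' inlE G := by
  ext ⟨v, x⟩
  simp only [inlE, PreGraph.trans, Set.mem_setOf_eq, Set.mem_image, Prod.mk.injEq]
  constructor
  · rintro ⟨⟨u, y⟩, hm, hu, hy⟩
    subst hy
    exact ⟨(u, x), hm, hu, rfl⟩
  · rintro ⟨⟨u, y⟩, hm, hu, rfl⟩
    exact ⟨(u, Sum.inl y), hm, hu, rfl⟩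

/-- The comparison relation for the forward direction. -/
def rfun (p q : Elt2 X) : Prop := p.2 = q.2 ∧ inlE p.1 = inlE q.1

lemma rfun_cong : IsCongOn (Mlam (iota2 X)) (rfun (X := X)) := by
  refine ⟨fun p _ => ⟨rfl, rfl⟩, fun p q h => ⟨h.1.symm, h.2.symm⟩,
    fun p q u h1 h2 => ⟨h1.1.trans h2.1, h1.2.trans h2.2⟩, ?_, ?_⟩
  · rintro p q p' q' _ _ _ _ ⟨h1, h2⟩ ⟨h1', h2'⟩
    refine ⟨by simp [gmul, h1, h1'], ?_⟩
    show inlE ((gmul p p').1) = inlE ((gmul q q').1)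
    simp only [gmul, inlE_union, inlE_trans, h1, h2, h1', h2']
  · rintro p q _ _ ⟨h1, h2⟩
    exact ⟨rfl, h2⟩

lemma rfun_N : ∀ a b : Elt2 X, NpRel a b → rfun a b := by
  rintro a b (⟨x, rfl, rfl⟩ | ⟨x, rfl, rfl⟩)
  · constructor
    · show FreeMonoid.of x = 1 * FreeMonoid.of x
      rw [one_mul]
    · show inlE (xElt2 x).1 = inlE ((gplus (xElt2 x)).1.union
        (PreGraph.trans 1 (xbarElt x).1))
      rw [inlE_union, inlE_trans]
      have : inlE (xbarElt x).1 = ∅ := by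
        ext ⟨v, y⟩
        simp only [inlE, xbarElt, Set.mem_setOf_eq, Set.mem_singleton_iff,
          Prod.mk.injEq, Set.mem_empty_iff_false, iff_false, not_and]
        intro _ h
        exact absurd h (by simp)
      rw [this, Set.image_empty, Set.union_empty]
      rfl
  · constructor
    · rfl
    · show inlE (lambdaGraph (FreeMonoid X) (Label2 X)) = inlE (xbarElt x).1
      ext ⟨v, y⟩
      simp only [inlE, lambdaGraph, xbarElt, Set.mem_setOf_eq,
        Set.mem_empty_iff_false, Set.mem_singleton_iff, Prod.mk.injEq, false_iff, not_and]
      intro _ h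
      exact absurd h (by simp)

end Stmt18Aux
/-- for the least `(·,⁺)`-congruence `ρ_p` on `M^λ(X*, X ∪ X̄)`
containing `N_p`: `(A,s) ρ_p (B,t)` iff `s = t` and the sets of edges of `A`
and of `B` labeled by letters of `X` coincide. -/
theorem stmt_18 (X : Type*) (A B : PreGraph (FreeMonoid X) (Label2 X))
    (s t : FreeMonoid X)
    (hA : (A, s) ∈ Mlam (iota2 X)) (hB : (B, t) ∈ Mlam (iota2 X)) :
    rhoP X (A, s) (B, t) ↔
      (s = t ∧
        {e : FreeMonoid X × X | (e.1, (Sum.inl e.2 : Label2 X)) ∈ A.edges} =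
        {e : FreeMonoid X × X | (e.1, (Sum.inl e.2 : Label2 X)) ∈ B.edges}) := by
  constructor
  · intro h
    exact h Stmt18Aux.rfun Stmt18Aux.rfun_cong Stmt18Aux.rfun_N
  · rintro ⟨rfl, hedges⟩
    have hinlAB : ∀ u x, (u, (Sum.inl x : Label2 X)) ∈ B.edges →
        (u, (Sum.inl x : Label2 X)) ∈ A.edges := fun u x hx =>
      (Set.ext_iff.mp hedges (u, x)).mpr hx
    have hinlBA : ∀ u x, (u, (Sum.inl x : Label2 X)) ∈ A.edges →
        (u, (Sum.inl x : Label2 X)) ∈ B.edges := fun u x hx =>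
      (Set.ext_iff.mp hedges (u, x)).mp hx
    have h1 := Stmt18Aux.rho_union A B s hA hB.1 hinlAB
    have h2 := Stmt18Aux.rho_union B A s hB hA.1 hinlBA
    have hcomm : B.union A = A.union B :=
      Stmt18Aux.pg_ext (Set.union_comm _ _) (Set.union_comm _ _)
    rw [hcomm] at h2
    exact Stmt18Aux.rho_trans h1 (Stmt18Aux.rho_symm h2)
end

section
/- Perf(X), together with the map ι : X → Perf(X) given by ι(x) = ({(1, x)}, x), is the free X-generated perfect F-restriction monoid. Explicitly: Perf(X) is a restriction monoid; every σ-class of Perf(X) has a maximum element, namely m((A,s)) = (∅, s); Perf(X) is perfect; and for every perfect F-restriction monoid R and every map f : X → R there is a unique map φ : Perf(X) → R preserving multiplication, the operation ⁺, the operation m, and the identity elements, such that φ ∘ ι = f. -/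
/-- `(R; mul, plus, m, lam)` is a perfect F-restriction monoid: an
F-restriction semigroup which is a monoid with identity `lam` and satisfies
`m(s)m(t) = m(st)` and `(m s)⁺ = λ`. -/
def IsPerfFRestrMonoid {R : Type*} (mul : R → R → R) (plus m : R → R)
    (lam : R) : Prop :=
  IsFRestrOps mul plus m lam ∧
  (∀ s, mul lam s = s ∧ mul s lam = s) ∧
  (∀ s t, mul (m s) (m t) = m (mul s t)) ∧
  (∀ s, plus (m s) = lam)

/-- The underlying set of `Perf(X)`: pairs `(A, s)` with `A` a finite subset of
`X* × X` and `s ∈ X*`. -/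
def Perf (X : Type*) := {p : Set (FreeMonoid X × X) × FreeMonoid X // p.1.Finite}

/-- Multiplication of `Perf(X)`: `(A,s)(B,t) = (A ∪ sB, st)`. -/
def pmul {X : Type*} (p q : Perf X) : Perf X :=
  ⟨(p.val.1 ∪ (fun b => (p.val.2 * b.1, b.2)) '' q.val.1, p.val.2 * q.val.2),
    p.property.union (q.property.image fun b => (p.val.2 * b.1, b.2))⟩

/-- The unary operation `⁺` of `Perf(X)`: `(A,s)⁺ = (A,1)`. -/
def pplus {X : Type*} (p : Perf X) : Perf X := ⟨(p.val.1, 1), p.property⟩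

/-- The unary operation `m` of `Perf(X)`: `m((A,s)) = (∅,s)`. -/
def pm {X : Type*} (p : Perf X) : Perf X := ⟨(∅, p.val.2), Set.finite_empty⟩

/-- The identity element `(∅, 1)` of `Perf(X)`. -/
def pone {X : Type*} : Perf X := ⟨(∅, 1), Set.finite_empty⟩

/-- The assignment map `ι : X → Perf(X)`, `ι(x) = ({(1,x)}, x)`. -/
def piota {X : Type*} (x : X) : Perf X :=
  ⟨({((1 : FreeMonoid X), x)}, FreeMonoid.of x), Set.finite_singleton _⟩


namespace PerfAux

variable {R : Type*} {mulR : R → R → R} {plusR mR : R → R} {lamR : R}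

section
variable (h : IsPerfFRestrMonoid mulR plusR mR lamR)
include h

theorem assoc : ∀ x y z, mulR (mulR x y) z = mulR x (mulR y z) := h.1.1.1
theorem plus_mul : ∀ x, mulR (plusR x) x = x := h.1.1.2.1
theorem pcomm : ∀ x y, mulR (plusR x) (plusR y) = mulR (plusR y) (plusR x) := h.1.1.2.2.1
theorem pdist : ∀ x y, plusR (mulR (plusR x) y) = mulR (plusR x) (plusR y) := h.1.1.2.2.2.1
theorem slide : ∀ x y, mulR x (plusR y) = mulR (plusR (mulR x y)) x := h.1.1.2.2.2.2
theorem msig : ∀ a, SigmaRel mulR plusR (mR a) a := fun a => (h.1.2.1 a).1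
theorem mmax : ∀ a t, SigmaRel mulR plusR t a → NatLe mulR plusR t (mR a) :=
  fun a t ht => (h.1.2.1 a).2 t ht
theorem lam_proj : IsProjection plusR lamR := h.1.2.2.1
theorem lam_mul : ∀ s, mulR lamR s = s := fun s => (h.2.1 s).1
theorem mul_lam : ∀ s, mulR s lamR = s := fun s => (h.2.1 s).2
theorem m_mul : ∀ s t, mulR (mR s) (mR t) = mR (mulR s t) := h.2.2.1
theorem plus_m : ∀ s, plusR (mR s) = lamR := h.2.2.2

set_option linter.unusedSectionVars false

/-- projections are idempotent -/
theorem proj_idem : ∀ a, mulR (plusR a) (plusR a) = plusR a := fun a => by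
  have h1 := pdist h a a
  rw [plus_mul h a] at h1
  exact h1.symm

/-- `plus` is idempotent on projections -/
theorem plus_plus : ∀ a, plusR (plusR a) = plusR a := fun a => by
  have h1 : plusR (mulR (plusR a) (plusR a)) = mulR (plusR a) (plusR (plusR a)) :=
    pdist h a (plusR a)
  rw [proj_idem h a] at h1
  calc plusR (plusR a) = mulR (plusR (plusR a)) (plusR a) :=
        ((pcomm h (plusR a) a).trans h1.symm).symm
    _ = plusR a := plus_mul h (plusR a)

theorem plus_lam : plusR lamR = lamR := by
  obtain ⟨a, ha⟩ := lam_proj h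
  rw [ha, plus_plus h]

/-- product of projections is a projection -/
theorem proj_mul {e f' : R} (he : IsProjection plusR e) (hf : IsProjection plusR f') :
    IsProjection plusR (mulR e f') := by
  obtain ⟨a, rfl⟩ := he; obtain ⟨b, rfl⟩ := hf
  exact ⟨mulR (plusR a) b, (pdist h a b).symm⟩

theorem proj_plus {e : R} (he : IsProjection plusR e) : plusR e = e := by
  obtain ⟨a, rfl⟩ := he; exact plus_plus h a

theorem proj_idem' {e : R} (he : IsProjection plusR e) : mulR e e = e := by
  obtain ⟨a, rfl⟩ := he; exact proj_idem h a

theorem proj_comm {e f' : R} (he : IsProjection plusR e) (hf : IsProjection plusR f') :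
    mulR e f' = mulR f' e := by
  obtain ⟨a, rfl⟩ := he; obtain ⟨b, rfl⟩ := hf; exact pcomm h a b

theorem proj_pdist {e : R} (he : IsProjection plusR e) (y : R) :
    plusR (mulR e y) = mulR e (plusR y) := by
  obtain ⟨a, rfl⟩ := he; exact pdist h a y

theorem sigma_refl (a : R) : SigmaRel mulR plusR a a := ⟨lamR, lam_proj h, rfl⟩

theorem sigma_symm {a b : R} (hab : SigmaRel mulR plusR a b) : SigmaRel mulR plusR b a := by
  obtain ⟨e, he, hh⟩ := hab; exact ⟨e, he, hh.symm⟩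

theorem sigma_trans {a b c : R} (hab : SigmaRel mulR plusR a b)
    (hbc : SigmaRel mulR plusR b c) : SigmaRel mulR plusR a c := by
  obtain ⟨e, he, h1⟩ := hab; obtain ⟨f', hf, h2⟩ := hbc
  refine ⟨mulR f' e, proj_mul h hf he, ?_⟩
  rw [assoc h, h1, ← assoc h, proj_comm h hf he, assoc h, h2, ← assoc h]

theorem natle_antisymm {s t : R} (h1 : NatLe mulR plusR s t) (h2 : NatLe mulR plusR t s) :
    s = t := by
  unfold NatLe at h1 h2
  have hs := congrArg plusR h1
  rw [pdist h] at hs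
  have ht := congrArg plusR h2
  rw [pdist h] at ht
  have hst : plusR s = plusR t := by rw [hs, pcomm h, ← ht]
  calc s = mulR (plusR s) t := h1
    _ = mulR (plusR t) t := by rw [hst]
    _ = t := plus_mul h t

theorem le_m (a : R) : a = mulR (plusR a) (mR a) := mmax h a a (sigma_refl h a)

theorem m_sigma_eq {a b : R} (hab : SigmaRel mulR plusR a b) : mR a = mR b := by
  have h1 : NatLe mulR plusR (mR a) (mR b) :=
    mmax h b _ (sigma_trans h (msig h a) hab)
  have h2 : NatLe mulR plusR (mR b) (mR a) :=
    mmax h a _ (sigma_trans h (msig h b) (sigma_symm h hab))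
  exact natle_antisymm h h1 h2

theorem m_m (a : R) : mR (mR a) = mR a := by
  have h1 : NatLe mulR plusR (mR a) (mR (mR a)) := mmax h (mR a) _ (sigma_refl h _)
  unfold NatLe at h1
  rw [plus_m h, lam_mul h] at h1
  exact h1.symm

theorem m_lam : mR lamR = lamR := by
  have h1 : NatLe mulR plusR lamR (mR lamR) := mmax h lamR _ (sigma_refl h _)
  unfold NatLe at h1
  rw [plus_lam h, lam_mul h] at h1
  exact h1.symm

theorem m_proj_mul {e : R} (he : IsProjection plusR e) (a : R) :
    mR (mulR e a) = mR a := by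
  refine m_sigma_eq h ⟨e, he, ?_⟩
  rw [← assoc h, proj_idem' h he]

theorem plus_mul_lam {x y : R} (hx : plusR x = lamR) (hy : plusR y = lamR) :
    plusR (mulR x y) = lamR := by
  have h1 : mulR x (plusR y) = mulR (plusR (mulR x y)) x := slide h x y
  rw [hy, mul_lam h] at h1
  have h2 := congrArg plusR h1
  rw [pdist h, hx, mul_lam h] at h2
  exact h2.symm

end

section IdemProd

variable {M : Type*} [CommMonoid M] {α : Type*} [DecidableEq α]

theorem prod_absorb (idem : ∀ x : M, x * x = x) (f : α → M) {S : Finset α} :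
    ∀ {T : Finset α}, T ⊆ S → S.prod f * T.prod f = S.prod f := by
  intro T
  induction T using Finset.induction_on with
  | empty => intro _; simp
  | @insert a T ha ih =>
    intro hsub
    have haS : a ∈ S := hsub (Finset.mem_insert_self a T)
    have key : S.prod f * f a = S.prod f := by
      rw [mul_comm, ← Finset.mul_prod_erase S f haS, ← mul_assoc, idem]
    rw [Finset.prod_insert ha, ← mul_assoc, key,
      ih (fun b hbT => hsub (Finset.mem_insert_of_mem hbT))]

theorem prod_union_idem (idem : ∀ x : M, x * x = x) (f : α → M) (S T : Finset α) :
    (S ∪ T).prod f = S.prod f * T.prod f := by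
  rw [← Finset.prod_union_inter]
  exact (prod_absorb idem f (Finset.inter_subset_left.trans Finset.subset_union_left)).symm

theorem prod_insert_idem (idem : ∀ x : M, x * x = x) (f : α → M) (a : α) (T : Finset α) :
    (insert a T).prod f = f a * T.prod f := by
  by_cases haT : a ∈ T
  · rw [Finset.insert_eq_self.2 haT, ← Finset.mul_prod_erase T f haT, ← mul_assoc, idem]
  · rw [Finset.prod_insert haT]

end IdemProd

section Univ

variable {R : Type*} {mulR : R → R → R} {plusR mR : R → R} {lamR : R}

/-- The commutative monoid of projections. -/
def prCM (h : IsPerfFRestrMonoid mulR plusR mR lamR) :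
    CommMonoid {e : R // IsProjection plusR e} where
  mul e f := ⟨mulR e.1 f.1, proj_mul h e.2 f.2⟩
  one := ⟨lamR, lam_proj h⟩
  mul_assoc a b c := Subtype.ext (assoc h a.1 b.1 c.1)
  one_mul a := Subtype.ext (lam_mul h a.1)
  mul_one a := Subtype.ext (mul_lam h a.1)
  mul_comm a b := Subtype.ext (proj_comm h a.2 b.2)

theorem prCM_idem (h : IsPerfFRestrMonoid mulR plusR mR lamR) :
    ∀ x : {e : R // IsProjection plusR e},
      (letI := prCM h; x * x) = x :=
  fun x => Subtype.ext (proj_idem' h x.2)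

variable {X : Type*}

/-- Extension of `f` to words: the product of the `m(f x)`. -/
def gw (mulR : R → R → R) (mR : R → R) (lamR : R) (f : X → R) : List X → R
  | [] => lamR
  | x :: l => mulR (mR (f x)) (gw mulR mR lamR f l)

/-- `h(u, x) = (g(u)·f(x))⁺` as an element of the projection monoid. -/
def hbp (mulR : R → R → R) (plusR mR : R → R) (lamR : R) (f : X → R)
    (b : FreeMonoid X × X) : {e : R // IsProjection plusR e} :=
  ⟨plusR (mulR (gw mulR mR lamR f b.1.toList) (f b.2)),
    ⟨mulR (gw mulR mR lamR f b.1.toList) (f b.2), rfl⟩⟩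

/-- `E(F) = ∏_{(u,x) ∈ F} (g(u)·f(x))⁺`. -/
noncomputable def Ef (h : IsPerfFRestrMonoid mulR plusR mR lamR) (f : X → R)
    (F : Finset (FreeMonoid X × X)) : R :=
  (@Finset.prod (FreeMonoid X × X) {e : R // IsProjection plusR e} (prCM h) F
    (hbp mulR plusR mR lamR f)).val

section
variable (h : IsPerfFRestrMonoid mulR plusR mR lamR) (f : X → R)
include h

theorem gw_append : ∀ l₁ l₂ : List X,
    gw mulR mR lamR f (l₁ ++ l₂) = mulR (gw mulR mR lamR f l₁) (gw mulR mR lamR f l₂) := by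
  intro l₁ l₂
  induction l₁ with
  | nil => exact (lam_mul h _).symm
  | cons x l ih =>
    show mulR (mR (f x)) (gw mulR mR lamR f (l ++ l₂)) = _
    rw [ih, ← assoc h]
    rfl

theorem gw_plus : ∀ l : List X, plusR (gw mulR mR lamR f l) = lamR := by
  intro l
  induction l with
  | nil => exact plus_lam h
  | cons x l ih => exact plus_mul_lam h (plus_m h (f x)) ih

theorem gw_m : ∀ l : List X, mR (gw mulR mR lamR f l) = gw mulR mR lamR f l := by
  intro l
  induction l with
  | nil => exact m_lam h
  | cons x l ih =>
    show mR (mulR (mR (f x)) (gw mulR mR lamR f l)) = mulR (mR (f x)) (gw mulR mR lamR f l)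
    rw [← ih, m_mul h]
    exact m_m h _

theorem Ef_proj (F : Finset (FreeMonoid X × X)) : IsProjection plusR (Ef h f F) :=
  (@Finset.prod (FreeMonoid X × X) {e : R // IsProjection plusR e} (prCM h) F
    (hbp mulR plusR mR lamR f)).2

theorem Ef_empty : Ef h f (∅ : Finset (FreeMonoid X × X)) = lamR := by
  letI := prCM h
  unfold Ef
  rw [Finset.prod_empty]
  rfl

theorem Ef_union [DecidableEq (FreeMonoid X × X)] (S T : Finset (FreeMonoid X × X)) :
    Ef h f (S ∪ T) = mulR (Ef h f S) (Ef h f T) := by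
  letI := prCM h
  unfold Ef
  rw [prod_union_idem (prCM_idem h) (hbp mulR plusR mR lamR f) S T]
  rfl

theorem Ef_insert [DecidableEq (FreeMonoid X × X)] (b : FreeMonoid X × X)
    (T : Finset (FreeMonoid X × X)) :
    Ef h f (insert b T) = mulR (hbp mulR plusR mR lamR f b).val (Ef h f T) := by
  letI := prCM h
  unfold Ef
  rw [prod_insert_idem (prCM_idem h) (hbp mulR plusR mR lamR f) b T]
  rfl

theorem hbp_slide (s : FreeMonoid X) (b : FreeMonoid X × X) :
    mulR (gw mulR mR lamR f s.toList) (hbp mulR plusR mR lamR f b).val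
      = mulR (hbp mulR plusR mR lamR f (s * b.1, b.2)).val (gw mulR mR lamR f s.toList) := by
  show mulR (gw mulR mR lamR f s.toList)
      (plusR (mulR (gw mulR mR lamR f b.1.toList) (f b.2)))
    = mulR (plusR (mulR (gw mulR mR lamR f (s * b.1).toList) (f b.2)))
        (gw mulR mR lamR f s.toList)
  rw [slide h, FreeMonoid.toList_mul, gw_append h f, assoc h]

theorem Ef_slide [DecidableEq (FreeMonoid X × X)] (s : FreeMonoid X)
    (F : Finset (FreeMonoid X × X)) :
    mulR (gw mulR mR lamR f s.toList) (Ef h f F)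
      = mulR (Ef h f (F.image fun b => (s * b.1, b.2))) (gw mulR mR lamR f s.toList) := by
  induction F using Finset.induction_on with
  | empty =>
    rw [Finset.image_empty, Ef_empty h f, mul_lam h, lam_mul h]
  | @insert b F hb ih =>
    rw [Finset.image_insert, Ef_insert h f, Ef_insert h f, ← assoc h, hbp_slide h f,
      assoc h, ih, ← assoc h]

end
end Univ

section Phi

variable {R : Type*} {mulR : R → R → R} {plusR mR : R → R} {lamR : R} {X : Type*}

/-- The canonical morphism `Perf X → R` induced by `f : X → R`. -/
noncomputable def phi (h : IsPerfFRestrMonoid mulR plusR mR lamR) (f : X → R)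
    (p : Perf X) : R :=
  mulR (Ef h f p.property.toFinset) (gw mulR mR lamR f p.val.2.toList)

variable (h : IsPerfFRestrMonoid mulR plusR mR lamR) (f : X → R)
include h

theorem middle_swap {a b c d e : R} (hswap : mulR b c = mulR c e) :
    mulR (mulR a b) (mulR c d) = mulR (mulR a c) (mulR e d) := by
  rw [assoc h, ← assoc h b c d, hswap, assoc h c e d, ← assoc h]

theorem phi_mul (p q : Perf X) :
    phi h f (pmul p q) = mulR (phi h f p) (phi h f q) := by
  classical
  obtain ⟨⟨A, s⟩, hA⟩ := p
  obtain ⟨⟨B, t⟩, hB⟩ := q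
  show mulR (Ef h f (Set.Finite.toFinset _)) (gw mulR mR lamR f (s * t).toList) = _
  erw [Set.Finite.toFinset_union hA (hB.image _),
    Set.Finite.toFinset_image (fun b => (s * b.1, b.2)) hB,
    Ef_union h f, FreeMonoid.toList_mul, gw_append h f]
  exact middle_swap h (Ef_slide h f s hB.toFinset).symm

theorem phi_plus (p : Perf X) : phi h f (pplus p) = plusR (phi h f p) := by
  obtain ⟨⟨A, s⟩, hA⟩ := p
  show mulR (Ef h f hA.toFinset) (gw mulR mR lamR f (FreeMonoid.toList 1))
      = plusR (mulR (Ef h f hA.toFinset) (gw mulR mR lamR f s.toList))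
  rw [FreeMonoid.toList_one, proj_pdist h (Ef_proj h f _), gw_plus h f]
  rfl

theorem phi_m (p : Perf X) : phi h f (pm p) = mR (phi h f p) := by
  obtain ⟨⟨A, s⟩, hA⟩ := p
  show mulR (Ef h f Set.finite_empty.toFinset) (gw mulR mR lamR f s.toList)
      = mR (mulR (Ef h f hA.toFinset) (gw mulR mR lamR f s.toList))
  rw [Set.Finite.toFinset_empty, Ef_empty h f, lam_mul h,
    m_proj_mul h (Ef_proj h f _), gw_m h f]

theorem phi_one : phi h f (pone : Perf X) = lamR := by
  show mulR (Ef h f Set.finite_empty.toFinset) (gw mulR mR lamR f (FreeMonoid.toList 1)) = lamR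
  rw [Set.Finite.toFinset_empty, Ef_empty h f, FreeMonoid.toList_one, lam_mul h]
  rfl

theorem phi_iota (x : X) : phi h f (piota x) = f x := by
  show mulR (Ef h f (Set.finite_singleton _).toFinset)
      (gw mulR mR lamR f (FreeMonoid.of x).toList) = f x
  rw [Set.Finite.toFinset_singleton, FreeMonoid.toList_of]
  have e1 : Ef h f ({((1 : FreeMonoid X), x)} : Finset _) = plusR (f x) := by
    letI := prCM h
    unfold Ef
    rw [Finset.prod_singleton]
    show plusR (mulR (gw mulR mR lamR f (FreeMonoid.toList (1 : FreeMonoid X))) (f x))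
        = plusR (f x)
    rw [FreeMonoid.toList_one]
    show plusR (mulR lamR (f x)) = plusR (f x)
    rw [lam_mul h]
  rw [e1]
  show mulR (plusR (f x)) (mulR (mR (f x)) lamR) = f x
  rw [mul_lam h]
  exact (le_m h (f x)).symm

theorem phi_unique (ψ : Perf X → R)
    (hm : ∀ p q, ψ (pmul p q) = mulR (ψ p) (ψ q))
    (hp : ∀ p, ψ (pplus p) = plusR (ψ p))
    (hmR : ∀ p, ψ (pm p) = mR (ψ p))
    (hone : ψ pone = lamR)
    (hi : ∀ x, ψ (piota x) = f x) :
    ∀ p, ψ p = phi h f p := by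
  classical
  have uw : ∀ l : List X,
      ψ ⟨(∅, FreeMonoid.ofList l), Set.finite_empty⟩ = gw mulR mR lamR f l := by
    intro l
    induction l with
    | nil => exact hone
    | cons x l ih =>
      have e : (⟨(∅, FreeMonoid.ofList (x :: l)), Set.finite_empty⟩ : Perf X)
          = pmul (pm (piota x)) ⟨(∅, FreeMonoid.ofList l), Set.finite_empty⟩ := by
        apply Subtype.ext
        simp [pmul, pm, piota]
      erw [e, hm, hmR, hi, ih]
      rfl
  have uA : ∀ (S : Set (FreeMonoid X × X)) (hS : S.Finite),
      ψ ⟨(S, 1), hS⟩ = Ef h f hS.toFinset := by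
    intro S hS
    refine Set.Finite.induction_on (motive := fun T _ => ∀ (hT : T.Finite),
      ψ ⟨(T, 1), hT⟩ = Ef h f hT.toFinset) S hS ?_ ?_ hS
    · intro hT
      rw [Set.Finite.toFinset_empty, Ef_empty h f]
      exact hone
    · intro a S₀ haS₀ hS₀ ih hT
      have e1 : (⟨(insert a S₀, 1), hT⟩ : Perf X)
          = pmul ⟨({a}, 1), Set.finite_singleton a⟩ ⟨(S₀, 1), hS₀⟩ := by
        apply Subtype.ext
        simp [pmul, Set.singleton_union]
      have e2 : (⟨(({a} : Set (FreeMonoid X × X)), 1), Set.finite_singleton a⟩ : Perf X)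
          = pplus (pmul ⟨(∅, a.1), Set.finite_empty⟩ (piota a.2)) := by
        apply Subtype.ext
        simp [pmul, pplus, piota]
      have ha1 : ψ ⟨(∅, a.1), Set.finite_empty⟩ = gw mulR mR lamR f a.1.toList := by
        have h' := uw a.1.toList
        rw [FreeMonoid.ofList_toList] at h'
        exact h'
      erw [e1, hm, e2, hp, hm, hi, ha1, ih hS₀, Set.Finite.toFinset_insert,
        Ef_insert h f]
      rfl
  intro p
  obtain ⟨⟨A, s⟩, hA⟩ := p
  have e : (⟨(A, s), hA⟩ : Perf X) = pmul ⟨(A, 1), hA⟩ ⟨(∅, s), Set.finite_empty⟩ := by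
    apply Subtype.ext
    simp [pmul]
  have hws : ψ ⟨(∅, s), Set.finite_empty⟩ = gw mulR mR lamR f s.toList := by
    have h' := uw s.toList
    rw [FreeMonoid.ofList_toList] at h'
    exact h'
  show ψ _ = mulR (Ef h f hA.toFinset) (gw mulR mR lamR f s.toList)
  erw [e, hm, uA A hA, hws]

end Phi

section PerfStruct

variable {X : Type*}

theorem himg : (fun b : FreeMonoid X × X => ((1 : FreeMonoid X) * b.1, b.2)) = id := by
  funext b
  simp

theorem perf_mono (X : Type*) : IsPerfFRestrMonoid (pmul (X := X)) pplus pm pone := by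
  refine ⟨⟨⟨?_, ?_, ?_, ?_, ?_⟩, ?_, ?_, ?_⟩, ?_, ?_, ?_⟩
  · intro p q r
    apply Subtype.ext
    simp [pmul, Set.image_union, Set.image_image, Set.union_assoc, mul_assoc]
  · intro p
    apply Subtype.ext
    simp [pmul, pplus, himg]
  · intro p q
    apply Subtype.ext
    simp [pmul, pplus, himg, Set.union_comm]
  · intro p q
    apply Subtype.ext
    simp [pmul, pplus]
  · intro p q
    apply Subtype.ext
    simp [pmul, pplus, himg]
    rw [Set.union_right_comm, Set.union_self]
  · intro p
    constructor
    · refine ⟨pplus p, ⟨p, rfl⟩, ?_⟩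
      apply Subtype.ext
      simp [pmul, pplus, pm, himg]
    · intro t ht
      obtain ⟨e, ⟨r, rfl⟩, heq⟩ := ht
      have h2 : t.val.2 = p.val.2 := by
        have h3 := congrArg (fun z : Perf X => z.val.2) heq
        simpa [pmul, pplus] using h3
      show t = pmul (pplus t) (pm p)
      apply Subtype.ext
      simp [pmul, pplus, pm, ← h2]
  · exact ⟨pone, rfl⟩
  · intro e he
    obtain ⟨q, rfl⟩ := he
    show pplus q = pmul (pplus (pplus q)) pone
    apply Subtype.ext
    simp [pmul, pplus, pone]
  · intro p
    constructor
    · apply Subtype.ext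
      simp [pmul, pone, himg]
    · apply Subtype.ext
      simp [pmul, pone]
  · intro p q
    apply Subtype.ext
    simp [pmul, pm]
  · intro p
    rfl

end PerfStruct

end PerfAux

/-- `Perf(X)`, with the assignment map `ι(x) = ({(1,x)}, x)`, is
the free `X`-generated perfect F-restriction monoid: it is a restriction
monoid, every σ-class has a maximum element, namely `m((A,s)) = (∅,s)`, it is
perfect, and it satisfies the corresponding universal property. -/
theorem stmt_19 (X : Type u) :
    IsPerfFRestrMonoid (pmul (X := X)) pplus pm pone ∧
    (∀ (R : Type u) (mulR : R → R → R) (plusR mR : R → R) (lamR : R),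
      IsPerfFRestrMonoid mulR plusR mR lamR → ∀ f : X → R,
      ∃! φ : Perf X → R,
        (∀ p q, φ (pmul p q) = mulR (φ p) (φ q)) ∧
        (∀ p, φ (pplus p) = plusR (φ p)) ∧
        (∀ p, φ (pm p) = mR (φ p)) ∧
        φ pone = lamR ∧
        (∀ x, φ (piota x) = f x)) := by
  constructor
  · exact PerfAux.perf_mono X
  · intro R mulR plusR mR lamR hR f
    refine ⟨PerfAux.phi hR f,
      ⟨PerfAux.phi_mul hR f, PerfAux.phi_plus hR f, PerfAux.phi_m hR f,
        PerfAux.phi_one hR f, PerfAux.phi_iota hR f⟩, ?_⟩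
    intro ψ hψ
    funext p
    exact PerfAux.phi_unique hR f ψ hψ.1 hψ.2.1 hψ.2.2.1 hψ.2.2.2.1 hψ.2.2.2.2 p
end
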